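/- arXiv:2510.22307 — 6 statements merged into one kernel-verified Lean document; each statement's English description precedes it below -/
import Mathlib

section
/- Let f, g : {0,1}^n → {0,1} be increasing Boolean functions. If f and g are both supermodular, or both submodular, then E[fg] − E[f]E[g] ≥ (1/4)·∑_{i=1}^n Inf_i[f]·Inf_i[g], where expectations are with respect to the uniform measure on {0,1}^n. -/
open Finset MeasureTheory

/-- Expectation with respect to the uniform measure on `{0,1}^n`. -/
noncomputable def Ev (n : ℕ) (f : (Fin n → Bool) → ℝ) : ℝ :=
  (∑ x : Fin n → Bool, f x) / 2 ^ n

/-- `f` is increasing (monotone w.r.t. the coordinatewise order). -/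
def Increasing' (n : ℕ) (f : (Fin n → Bool) → ℝ) : Prop :=
  ∀ x y : Fin n → Bool, (∀ i, x i ≤ y i) → f x ≤ f y

/-- `f` is submodular: `f(x∧y) + f(x∨y) ≤ f(x) + f(y)`. -/
def Submodular' (n : ℕ) (f : (Fin n → Bool) → ℝ) : Prop :=
  ∀ x y : Fin n → Bool,
    f (fun i => x i && y i) + f (fun i => x i || y i) ≤ f x + f y

/-- `f` is supermodular: `f(x) + f(y) ≤ f(x∧y) + f(x∨y)`. -/
def Supermodular' (n : ℕ) (f : (Fin n → Bool) → ℝ) : Prop :=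
  ∀ x y : Fin n → Bool,
    f x + f y ≤ f (fun i => x i && y i) + f (fun i => x i || y i)

/-- Discrete derivative `∂_i f (x) = f(x^{(i→1)}) - f(x^{(i→0)})`. -/
noncomputable def pD (n : ℕ) (i : Fin n) (f : (Fin n → Bool) → ℝ) :
    (Fin n → Bool) → ℝ :=
  fun x => f (Function.update x i true) - f (Function.update x i false)

/-- Character `χ_S(x) = (-1)^{∑_{i ∈ S} x_i}`. -/
noncomputable def chi (n : ℕ) (S : Finset (Fin n)) (x : Fin n → Bool) : ℝ :=
  ∏ i ∈ S, (if x i then (-1 : ℝ) else 1)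

/-- Fourier--Walsh coefficient `f̂(S) = E[f · χ_S]`. -/
noncomputable def fhat (n : ℕ) (f : (Fin n → Bool) → ℝ) (S : Finset (Fin n)) : ℝ :=
  Ev n (fun x => f x * chi n S x)

/-- Heat semigroup `P_t f = ∑_S e^{-t|S|} f̂(S) χ_S`. -/
noncomputable def heat (n : ℕ) (t : ℝ) (f : (Fin n → Bool) → ℝ) :
    (Fin n → Bool) → ℝ :=
  fun x => ∑ S : Finset (Fin n), Real.exp (-(t * S.card)) * fhat n f S * chi n S x

/-- Influence of coordinate `i` on a Boolean (`{0,1}`-valued) function: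
`Inf_i[f] = P[f(x) ≠ f(x ⊕ e_i)]`. -/
noncomputable def InfB (n : ℕ) (i : Fin n) (f : (Fin n → Bool) → ℝ) : ℝ :=
  Ev n (fun x => if f x = f (Function.update x i (! x i)) then 0 else 1)

/-- `L¹`-influence `Inf_i^{(1)}[f] = E[|∂_i f|]`. -/
noncomputable def Inf1 (n : ℕ) (i : Fin n) (f : (Fin n → Bool) → ℝ) : ℝ :=
  Ev n (fun x => |pD n i f x|)

/-- `L²`-influence `Inf_i[f] = E[|∂_i f|²]` for real-valued `f`. -/
noncomputable def Inf2 (n : ℕ) (i : Fin n) (f : (Fin n → Bool) → ℝ) : ℝ :=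
  Ev n (fun x => |pD n i f x| ^ 2)

/-- Difference operator `D_i f (x) = f(x) - f(x ⊕ e_i)`. -/
noncomputable def Dop (n : ℕ) (i : Fin n) (f : (Fin n → Bool) → ℝ) :
    (Fin n → Bool) → ℝ :=
  fun x => f x - f (Function.update x i (! x i))

/-- `‖f‖_p = (E[|f|^p])^{1/p}` (also used as a quasi-norm for `0 < p < 1`). -/
noncomputable def nrm (n : ℕ) (p : ℝ) (f : (Fin n → Bool) → ℝ) : ℝ :=
  (Ev n (fun x => |f x| ^ p)) ^ (1 / p)

/-- Iterated discrete derivative along a list of coordinates. -/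
noncomputable def pDList (n : ℕ) : List (Fin n) → ((Fin n → Bool) → ℝ) → ((Fin n → Bool) → ℝ)
  | [], f => f
  | i :: l, f => pD n i (pDList n l f)

/-- `∂_T f = ∂_{i₁} ∘ ⋯ ∘ ∂_{i_d} f` for `T = {i₁ < ⋯ < i_d}` (the order is immaterial
since discrete derivatives along distinct coordinates commute). -/
noncomputable def pDT (n : ℕ) (T : Finset (Fin n)) (f : (Fin n → Bool) → ℝ) :
    (Fin n → Bool) → ℝ :=
  pDList n (T.sort (· ≤ ·)) f

/-! An increasing supermodular `{0,1}`-valued function is either `0` or the indicator of a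
subcube `{x | ∀ i ∈ A, x i = 1}`: supermodularity makes its support closed under `∧`, so the
support is the up-set of its minimum. For two such indicators, with `k = |A ∩ B|`, the
covariance is `2^{-|A ∪ B|} (1 - 2^{-k})` while the right-hand side is `k 2^{-|A ∪ B| - k}`, so
the inequality reduces to `k + 1 ≤ 2^k`. The submodular case follows from the supermodular
one applied to the duals `x ↦ 1 - f (¬x)`, which keep monotonicity, covariance and influences
and exchange submodularity with supermodularity. -/

open Function

section

variable {n : ℕ} {f g : (Fin n → Bool) → ℝ}

lemma Ev_prod (s : Finset (Fin n)) (h : Fin n → Bool → ℝ) :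
    Ev n (fun x => ∏ i ∈ s, h i (x i)) = ∏ i ∈ s, (h i false + h i true) / 2 := by
  set h' : Fin n → Bool → ℝ := fun i b => if i ∈ s then h i b else 1
  have hsum : ∑ x : Fin n → Bool, ∏ i ∈ s, h i (x i) = ∏ i, ∑ b, h' i b := by
    simp only [Fintype.prod_sum, h', ← Fintype.prod_extend_by_one s]
  rw [Ev, hsum, ← Fintype.prod_extend_by_one s, ← Fin.prod_const, ← prod_div_distrib]
  refine prod_congr rfl fun i _ => ?_
  by_cases hi : i ∈ s <;> simp [h', hi, add_comm]

lemma Ev_one_sub (F : (Fin n → Bool) → ℝ) : Ev n (fun x => 1 - F x) = 1 - Ev n F := by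
  simp [Ev, sum_sub_distrib, sub_div]

lemma Ev_comp_not (F : (Fin n → Bool) → ℝ) : Ev n (fun x => F (fun i => !x i)) = Ev n F := by
  unfold Ev
  congr 1
  exact Equiv.sum_comp (Involutive.toPerm (fun x : Fin n → Bool => fun i => !x i)
    fun x => by simp) F

noncomputable def andIndicator (n : ℕ) (A : Finset (Fin n)) (x : Fin n → Bool) : ℝ :=
  if ∀ i ∈ A, x i = true then 1 else 0

lemma andIndicator_eq_prod (A : Finset (Fin n)) (x : Fin n → Bool) :
    andIndicator n A x = ∏ i ∈ A, if x i then 1 else 0 := by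
  simp [andIndicator, prod_boole]

lemma andIndicator_eq_zero_or_one (A : Finset (Fin n)) (x : Fin n → Bool) :
    andIndicator n A x = 0 ∨ andIndicator n A x = 1 := by
  unfold andIndicator
  split_ifs <;> simp

lemma andIndicator_mul (A B : Finset (Fin n)) (x : Fin n → Bool) :
    andIndicator n A x * andIndicator n B x = andIndicator n (A ∪ B) x := by
  simp only [andIndicator, forall_mem_union]
  split_ifs <;> simp_all

lemma Ev_andIndicator (A : Finset (Fin n)) : Ev n (andIndicator n A) = (1 / 2) ^ A.card := by
  rw [funext (andIndicator_eq_prod A), Ev_prod A fun _ b => if b then 1 else 0]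
  simp

lemma andIndicator_update_of_mem {A : Finset (Fin n)} {i : Fin n} (hi : i ∈ A)
    (x : Fin n → Bool) (b : Bool) :
    andIndicator n A (update x i b) = (if b then 1 else 0) * andIndicator n (A.erase i) x := by
  rw [andIndicator_eq_prod, ← mul_prod_erase A _ hi, andIndicator_eq_prod, update_self]
  congr 1
  refine prod_congr rfl fun j hj => ?_
  rw [update_of_ne (ne_of_mem_erase hj)]

lemma andIndicator_update_of_notMem {A : Finset (Fin n)} {i : Fin n} (hi : i ∉ A)
    (x : Fin n → Bool) (b : Bool) : andIndicator n A (update x i b) = andIndicator n A x := by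
  simp only [andIndicator_eq_prod]
  refine prod_congr rfl fun j hj => ?_
  rw [update_of_ne (ne_of_mem_of_not_mem hj hi)]

lemma InfB_andIndicator (A : Finset (Fin n)) (i : Fin n) :
    InfB n i (andIndicator n A) = if i ∈ A then 2 * (1 / 2) ^ A.card else 0 := by
  by_cases hi : i ∈ A
  · have hflip (x : Fin n → Bool) : (if andIndicator n A x =
        andIndicator n A (update x i (!x i)) then 0 else 1) = andIndicator n (A.erase i) x := by
      -- both sides of the comparison, with `x` written as `update x i (x i)`
      conv_lhs => rw [← update_eq_self i x, andIndicator_update_of_mem hi,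
        andIndicator_update_of_mem hi, update_eq_self]
      cases x i <;> rcases andIndicator_eq_zero_or_one (A.erase i) x with h | h <;> simp [h]
    rw [InfB, funext hflip, Ev_andIndicator, if_pos hi, ← card_erase_add_one hi, pow_succ]
    ring
  · simp [InfB, andIndicator_update_of_notMem hi, Ev, hi]

lemma sum_InfB_andIndicator_mul (A B : Finset (Fin n)) :
    ∑ i, InfB n i (andIndicator n A) * InfB n i (andIndicator n B)
      = (A ∩ B).card * (4 * (1 / 2) ^ A.card * (1 / 2) ^ B.card) := by
  simp_rw [InfB_andIndicator, ite_zero_mul_ite_zero, ← mem_inter, sum_ite_mem,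
    univ_inter, sum_const, nsmul_eq_mul]
  ring

lemma dream_inequality_andIndicator (A B : Finset (Fin n)) :
    Ev n (fun x => andIndicator n A x * andIndicator n B x)
        - Ev n (andIndicator n A) * Ev n (andIndicator n B) ≥
      1 / 4 * ∑ i, InfB n i (andIndicator n A) * InfB n i (andIndicator n B) := by
  simp only [andIndicator_mul, Ev_andIndicator, sum_InfB_andIndicator_mul]
  set k := (A ∩ B).card
  have hsplit :
      ((1 : ℝ) / 2) ^ A.card * (1 / 2) ^ B.card = (1 / 2) ^ (A ∪ B).card * (1 / 2) ^ k := by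
    rw [← pow_add, ← pow_add, card_union_add_card_inter]
  have hk : (k : ℝ) * (1 / 2) ^ k ≤ 1 - (1 / 2) ^ k := by
    have hlt : (k + 1 : ℝ) ≤ 2 ^ k := by exact_mod_cast Nat.lt_two_pow_self
    have hinv : (2 : ℝ) ^ k * (1 / 2) ^ k = 1 := by rw [← mul_pow]; norm_num
    nlinarith [pow_pos (one_half_pos (α := ℝ)) k]
  rw [ge_iff_le, mul_assoc (4 : ℝ), hsplit]
  calc (1 / 4 : ℝ) * (k * (4 * ((1 / 2) ^ (A ∪ B).card * (1 / 2) ^ k)))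
      = (1 / 2) ^ (A ∪ B).card * (k * (1 / 2) ^ k) := by ring
    _ ≤ (1 / 2) ^ (A ∪ B).card * (1 - (1 / 2) ^ k) := by gcongr
    _ = (1 / 2) ^ (A ∪ B).card - (1 / 2) ^ (A ∪ B).card * (1 / 2) ^ k := by ring

lemma Supermodular'.apply_inf_eq_one (hf01 : ∀ x, f x = 0 ∨ f x = 1)
    (hs : Supermodular' n f) {x y : Fin n → Bool} (hx : f x = 1) (hy : f y = 1) :
    f (x ⊓ y) = 1 := by
  have h : f x + f y ≤ f (x ⊓ y) + f (fun i => x i || y i) := hs x y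
  rcases hf01 (x ⊓ y) with h0 | h1
  · rcases hf01 (fun i => x i || y i) with h0' | h1' <;> linarith
  · exact h1

lemma eq_zero_or_eq_andIndicator (hf01 : ∀ x, f x = 0 ∨ f x = 1) (hf : Increasing' n f)
    (hs : Supermodular' n f) : f = 0 ∨ ∃ A, f = andIndicator n A := by
  by_cases hzero : ∀ x, f x = 0
  · exact Or.inl (funext hzero)
  obtain ⟨x₀, hx₀⟩ := not_forall.mp hzero
  set U := univ.filter fun x => f x = 1
  have hU : U.Nonempty := ⟨x₀, by simpa [U] using (hf01 x₀).resolve_left hx₀⟩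
  set m := U.inf' hU id
  have hm : f m = 1 := inf'_mem {x | f x = 1}
    (fun _ hx _ hy => hs.apply_inf_eq_one hf01 hx hy) U hU id fun x hx => by simpa [U] using hx
  have hone (x : Fin n → Bool) : f x = 1 ↔ m ≤ x :=
    ⟨fun hx => inf'_le id (by simpa [U]),
      fun hmx => (hf01 x).resolve_left fun h0 => by linarith [hf m x hmx]⟩
  refine Or.inr ⟨univ.filter fun i => m i, funext fun x => ?_⟩
  have hA : (∀ i ∈ univ.filter fun i => m i, x i = true) ↔ m ≤ x := by
    simp [Pi.le_def, Bool.le_iff_imp]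
  rw [andIndicator, if_congr (hA.trans (hone x).symm) rfl rfl]
  rcases hf01 x with h | h <;> simp [h]

lemma dream_inequality_of_supermodular
    (hf01 : ∀ x, f x = 0 ∨ f x = 1) (hg01 : ∀ x, g x = 0 ∨ g x = 1)
    (hf : Increasing' n f) (hg : Increasing' n g) (hfs : Supermodular' n f)
    (hgs : Supermodular' n g) :
    Ev n (fun x => f x * g x) - Ev n f * Ev n g ≥
      1 / 4 * ∑ i, InfB n i f * InfB n i g := by
  rcases eq_zero_or_eq_andIndicator hf01 hf hfs with rfl | ⟨A, rfl⟩
  · simp [Ev, InfB]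
  rcases eq_zero_or_eq_andIndicator hg01 hg hgs with rfl | ⟨B, rfl⟩
  · simp [Ev, InfB]
  exact dream_inequality_andIndicator A B

def booleanDual (f : (Fin n → Bool) → ℝ) (x : Fin n → Bool) : ℝ := 1 - f fun i => !x i

lemma booleanDual_eq_zero_or_one (hf01 : ∀ x, f x = 0 ∨ f x = 1) (x : Fin n → Bool) :
    booleanDual f x = 0 ∨ booleanDual f x = 1 := by
  rcases hf01 fun i => !x i with h | h <;> simp [booleanDual, h]

lemma Increasing'.booleanDual (hf : Increasing' n f) : Increasing' n (booleanDual f) := by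
  intro x y hxy
  have := hf (fun i => !y i) (fun i => !x i) fun i => by
    have := hxy i; revert this; cases x i <;> cases y i <;> decide
  simp only [_root_.booleanDual]
  linarith

lemma Submodular'.supermodular_booleanDual (hf : Submodular' n f) :
    Supermodular' n (booleanDual f) := by
  intro x y
  have := hf (fun i => !x i) (fun i => !y i)
  simp only [booleanDual, Bool.not_and, Bool.not_or]
  linarith

lemma Ev_booleanDual (f : (Fin n → Bool) → ℝ) : Ev n (booleanDual f) = 1 - Ev n f :=
  (Ev_comp_not fun y => 1 - f y).trans (Ev_one_sub f)

lemma InfB_booleanDual (i : Fin n) (f : (Fin n → Bool) → ℝ) :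
    InfB n i (booleanDual f) = InfB n i f := by
  refine (congrArg (Ev n) (funext fun x => ?_)).trans
    (Ev_comp_not fun y => if f y = f (update y i (!y i)) then 0 else 1)
  simp only [booleanDual, sub_right_inj]
  rw [show (fun j => !update x i (!x i) j) = update (fun j => !x j) i (!!x i) from
    comp_update not x i (!x i)]

lemma covariance_booleanDual (f g : (Fin n → Bool) → ℝ) :
    Ev n (fun x => booleanDual f x * booleanDual g x)
        - Ev n (booleanDual f) * Ev n (booleanDual g)
      = Ev n (fun x => f x * g x) - Ev n f * Ev n g := by
  have hprod : Ev n (fun x => booleanDual f x * booleanDual g x)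
      = 1 - Ev n f - Ev n g + Ev n (fun x => f x * g x) := by
    refine (Ev_comp_not fun y => (1 - f y) * (1 - g y)).trans ?_
    simp [Ev, sub_mul, mul_sub, sub_div, sum_sub_distrib]
    ring
  rw [hprod, Ev_booleanDual, Ev_booleanDual]
  ring

end

/-- For increasing Boolean functions `f, g : {0,1}^n → {0,1}` that are
both supermodular or both submodular,
`E[fg] − E[f]E[g] ≥ (1/4) ∑_i Inf_i[f]·Inf_i[g]`. -/
theorem dream_inequality_boolean (n : ℕ) (f g : (Fin n → Bool) → ℝ)
    (hf01 : ∀ x, f x = 0 ∨ f x = 1) (hg01 : ∀ x, g x = 0 ∨ g x = 1)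
    (hf : Increasing' n f) (hg : Increasing' n g)
    (hmod : (Supermodular' n f ∧ Supermodular' n g) ∨
            (Submodular' n f ∧ Submodular' n g)) :
    Ev n (fun x => f x * g x) - Ev n f * Ev n g ≥
      (1 / 4) * ∑ i : Fin n, InfB n i f * InfB n i g := by
  rcases hmod with ⟨hfs, hgs⟩ | ⟨hfs, hgs⟩
  · exact dream_inequality_of_supermodular hf01 hg01 hf hg hfs hgs
  · have hdual := dream_inequality_of_supermodular (booleanDual_eq_zero_or_one hf01)
      (booleanDual_eq_zero_or_one hg01) hf.booleanDual hg.booleanDual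
      hfs.supermodular_booleanDual hgs.supermodular_booleanDual
    simpa only [covariance_booleanDual, InfB_booleanDual] using hdual
end

section
/- Let f, g : {0,1}^n → ℝ. If f and g are both supermodular, or both submodular, then E[fg] − E[f]E[g] ≥ ∑_{i=1}^n f̂({i})·ĝ({i}), where f̂(S) denotes the Fourier–Walsh coefficient of f at S ⊆ [n]. -/
open Finset MeasureTheory

lemma Ev_add' (n : ℕ) (f g : (Fin n → Bool) → ℝ) :
    Ev n (fun x => f x + g x) = Ev n f + Ev n g := by
  simp [Ev, Finset.sum_add_distrib, add_div]

lemma Ev_sub' (n : ℕ) (f g : (Fin n → Bool) → ℝ) :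
    Ev n (fun x => f x - g x) = Ev n f - Ev n g := by
  simp [Ev, Finset.sum_sub_distrib, sub_div]

lemma Ev_neg' (n : ℕ) (f : (Fin n → Bool) → ℝ) :
    Ev n (fun x => -f x) = -Ev n f := by
  simp [Ev, neg_div]

lemma Ev_mono' (n : ℕ) (f g : (Fin n → Bool) → ℝ) (h : ∀ x, f x ≤ g x) :
    Ev n f ≤ Ev n g := by
  unfold Ev
  apply div_le_div_of_nonneg_right (Finset.sum_le_sum (fun x _ => h x)) (by positivity)

lemma Ev_zero' (f : (Fin 0 → Bool) → ℝ) : Ev 0 f = f default := by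
  rw [Ev, Fintype.sum_unique]
  norm_num
  exact congrArg f (Subsingleton.elim _ _)

lemma sum_cons' (n : ℕ) (F : (Fin (n+1) → Bool) → ℝ) :
    ∑ x : Fin (n+1) → Bool, F x
      = ∑ x : Fin n → Bool, (F (Fin.cons false x) + F (Fin.cons true x)) := by
  rw [← Fintype.sum_equiv (Fin.consEquiv (fun _ => Bool))
      (fun p => F (Fin.cons p.1 p.2)) F (fun p => rfl)]
  rw [Fintype.sum_prod_type_right]
  exact Fintype.sum_congr _ _ (fun x => by rw [Fintype.sum_bool]; ring)

lemma Ev_succ' (n : ℕ) (F : (Fin (n+1) → Bool) → ℝ) :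
    Ev (n+1) F = (Ev n (fun x => F (Fin.cons false x)) + Ev n (fun x => F (Fin.cons true x))) / 2 := by
  unfold Ev
  rw [sum_cons', Finset.sum_add_distrib, pow_succ]
  ring

lemma fhat_zero' (n : ℕ) (F : (Fin (n+1) → Bool) → ℝ) :
    fhat (n+1) F {0} = (Ev n (fun x => F (Fin.cons false x)) - Ev n (fun x => F (Fin.cons true x))) / 2 := by
  unfold fhat
  rw [Ev_succ']
  simp only [chi, Finset.prod_singleton, Fin.cons_zero, if_true, if_false, mul_one,
    Bool.false_eq_true, ite_false, ite_true, mul_neg_one]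
  rw [Ev_neg']
  ring

lemma fhat_succ' (n : ℕ) (F : (Fin (n+1) → Bool) → ℝ) (i : Fin n) :
    fhat (n+1) F {i.succ}
      = (fhat n (fun x => F (Fin.cons false x)) {i} + fhat n (fun x => F (Fin.cons true x)) {i}) / 2 := by
  unfold fhat
  rw [Ev_succ']
  simp only [chi, Finset.prod_singleton, Fin.cons_succ]

lemma fhat_add' (n : ℕ) (f g : (Fin n → Bool) → ℝ) (S : Finset (Fin n)) :
    fhat n (fun x => f x + g x) S = fhat n f S + fhat n g S := by
  unfold fhat
  rw [← Ev_add']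
  congr 1; funext x; ring

lemma fhat_neg' (n : ℕ) (f : (Fin n → Bool) → ℝ) (S : Finset (Fin n)) :
    fhat n (fun x => -f x) S = -fhat n f S := by
  simp only [fhat, neg_mul, Ev_neg']

lemma band_of_le' {a b : Bool} (h : a ≤ b) : (a && b) = a := by
  cases a <;> cases b <;> revert h <;> decide

lemma bor_of_le' {a b : Bool} (h : a ≤ b) : (a || b) = b := by
  cases a <;> cases b <;> revert h <;> decide

lemma super_restrict' (n : ℕ) (f : (Fin (n+1) → Bool) → ℝ)
    (hf : Supermodular' (n+1) f) (b : Bool) :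
    Supermodular' n (fun x => f (Fin.cons b x)) := by
  intro x y
  have h := hf (Fin.cons b x) (Fin.cons b y)
  have hand : (fun i => (Fin.cons b x : Fin (n+1) → Bool) i && (Fin.cons b y : Fin (n+1) → Bool) i)
      = Fin.cons b (fun j => x j && y j) := by
    funext i
    cases i using Fin.cases <;> simp
  have hor : (fun i => (Fin.cons b x : Fin (n+1) → Bool) i || (Fin.cons b y : Fin (n+1) → Bool) i)
      = Fin.cons b (fun j => x j || y j) := by
    funext i
    cases i using Fin.cases <;> simp
  rw [hand, hor] at h
  exact h

lemma super_add' (n : ℕ) (p q : (Fin n → Bool) → ℝ)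
    (hp : Supermodular' n p) (hq : Supermodular' n q) :
    Supermodular' n (fun x => p x + q x) := by
  intro x y
  have h1 := hp x y
  have h2 := hq x y
  dsimp only
  linarith

lemma super_neg' (n : ℕ) (f : (Fin n → Bool) → ℝ) (hf : Submodular' n f) :
    Supermodular' n (fun x => -f x) := by
  intro x y
  have h := hf x y
  dsimp only
  linarith

lemma deriv_incr' (n : ℕ) (f : (Fin (n+1) → Bool) → ℝ) (hf : Supermodular' (n+1) f) :
    Increasing' n (fun x => f (Fin.cons true x) - f (Fin.cons false x)) := by
  intro x y hxy
  have h := hf (Fin.cons true x) (Fin.cons false y)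
  have hand : (fun i => (Fin.cons true x : Fin (n+1) → Bool) i && (Fin.cons false y : Fin (n+1) → Bool) i)
      = Fin.cons false x := by
    funext i
    cases i using Fin.cases with
    | zero => simp
    | succ j => simp [band_of_le' (hxy j)]
  have hor : (fun i => (Fin.cons true x : Fin (n+1) → Bool) i || (Fin.cons false y : Fin (n+1) → Bool) i)
      = Fin.cons true y := by
    funext i
    cases i using Fin.cases with
    | zero => simp
    | succ j => simp [bor_of_le' (hxy j)]
  rw [hand, hor] at h
  dsimp only
  linarith

lemma incr_restrict' (n : ℕ) (u : (Fin (n+1) → Bool) → ℝ)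
    (hu : Increasing' (n+1) u) (b : Bool) :
    Increasing' n (fun x => u (Fin.cons b x)) := by
  intro x y hxy
  apply hu
  intro i
  cases i using Fin.cases with
  | zero => simp
  | succ j => simpa using hxy j

lemma harris' : ∀ (n : ℕ) (u v : (Fin n → Bool) → ℝ),
    Increasing' n u → Increasing' n v →
    Ev n u * Ev n v ≤ Ev n (fun x => u x * v x) := by
  intro n
  induction n with
  | zero =>
    intro u v _ _
    simp [Ev_zero']
  | succ n ih =>
    intro u v hu hv
    have h00 : Ev n (fun x => u (Fin.cons false x)) * Ev n (fun x => v (Fin.cons false x)) ≤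
        Ev n (fun x => u (Fin.cons false x) * v (Fin.cons false x)) :=
      ih _ _ (incr_restrict' n u hu false) (incr_restrict' n v hv false)
    have h11 : Ev n (fun x => u (Fin.cons true x)) * Ev n (fun x => v (Fin.cons true x)) ≤
        Ev n (fun x => u (Fin.cons true x) * v (Fin.cons true x)) :=
      ih _ _ (incr_restrict' n u hu true) (incr_restrict' n v hv true)
    have hle : ∀ x : Fin n → Bool, ∀ i, (Fin.cons false x : Fin (n+1) → Bool) i ≤ (Fin.cons true x : Fin (n+1) → Bool) i := by
      intro x i
      cases i using Fin.cases <;> simp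
    have hEu : Ev n (fun x => u (Fin.cons false x)) ≤ Ev n (fun x => u (Fin.cons true x)) :=
      Ev_mono' n _ _ (fun x => hu _ _ (hle x))
    have hEv : Ev n (fun x => v (Fin.cons false x)) ≤ Ev n (fun x => v (Fin.cons true x)) :=
      Ev_mono' n _ _ (fun x => hv _ _ (hle x))
    simp only [Ev_succ']
    nlinarith [mul_nonneg (sub_nonneg.2 hEu) (sub_nonneg.2 hEv), h00, h11]

lemma Ev_expand4' (n : ℕ) (a b c d : (Fin n → Bool) → ℝ) :
    Ev n (fun x => (a x + b x) * (c x + d x))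
      = Ev n (fun x => a x * c x) + Ev n (fun x => a x * d x)
        + Ev n (fun x => b x * c x) + Ev n (fun x => b x * d x) := by
  rw [← Ev_add', ← Ev_add', ← Ev_add']
  exact congrArg (Ev n) (funext fun x => by ring)

lemma Ev_expandsub' (n : ℕ) (a b c d : (Fin n → Bool) → ℝ) :
    Ev n (fun x => (a x - b x) * (c x - d x))
      = Ev n (fun x => a x * c x) - Ev n (fun x => a x * d x)
        - Ev n (fun x => b x * c x) + Ev n (fun x => b x * d x) := by
  rw [← Ev_sub', ← Ev_sub', ← Ev_add']
  exact congrArg (Ev n) (funext fun x => by ring)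

lemma main_super' : ∀ (n : ℕ) (f g : (Fin n → Bool) → ℝ),
    Supermodular' n f → Supermodular' n g →
    ∑ i : Fin n, fhat n f {i} * fhat n g {i}
      ≤ Ev n (fun x => f x * g x) - Ev n f * Ev n g := by
  intro n
  induction n with
  | zero =>
    intro f g _ _
    simp [Ev_zero']
  | succ n ih =>
    intro f g hf hg
    have ihh := ih (fun x => f (Fin.cons false x) + f (Fin.cons true x))
        (fun x => g (Fin.cons false x) + g (Fin.cons true x))
        (super_add' n _ _ (super_restrict' n f hf false) (super_restrict' n f hf true))
        (super_add' n _ _ (super_restrict' n g hg false) (super_restrict' n g hg true))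
    have hard := harris' n (fun x => f (Fin.cons true x) - f (Fin.cons false x))
        (fun x => g (Fin.cons true x) - g (Fin.cons false x))
        (deriv_incr' n f hf) (deriv_incr' n g hg)
    simp only [Ev_expand4', Ev_add', fhat_add'] at ihh
    simp only [Ev_expandsub', Ev_sub'] at hard
    have hS : ∑ i : Fin n, fhat (n+1) f {Fin.succ i} * fhat (n+1) g {Fin.succ i}
        = (∑ i : Fin n,
            (fhat n (fun x => f (Fin.cons false x)) {i} + fhat n (fun x => f (Fin.cons true x)) {i})
            * (fhat n (fun x => g (Fin.cons false x)) {i} + fhat n (fun x => g (Fin.cons true x)) {i})) / 4 := by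
      rw [Finset.sum_div]
      exact Finset.sum_congr rfl (fun i _ => by rw [fhat_succ', fhat_succ']; ring)
    rw [Fin.sum_univ_succ, hS, fhat_zero', fhat_zero']
    simp only [Ev_succ']
    linarith


/-- For `f, g : {0,1}^n → ℝ` both supermodular or both submodular,
`E[fg] − E[f]E[g] ≥ ∑_i f̂({i})·ĝ({i})`. -/
theorem covariance_ge_level_one (n : ℕ) (f g : (Fin n → Bool) → ℝ)
    (hmod : (Supermodular' n f ∧ Supermodular' n g) ∨
            (Submodular' n f ∧ Submodular' n g)) :
    Ev n (fun x => f x * g x) - Ev n f * Ev n g ≥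
      ∑ i : Fin n, fhat n f {i} * fhat n g {i} := by
  rcases hmod with ⟨hf, hg⟩ | ⟨hf, hg⟩
  · exact main_super' n f g hf hg
  · have h := main_super' n (fun x => -f x) (fun x => -g x)
      (super_neg' n f hf) (super_neg' n g hg)
    simp only [fhat_neg', neg_mul_neg, Ev_neg'] at h
    exact h
end

section
/- Let f, g : {0,1}^n → ℝ. Then ∑_{S ⊆ [n], |S| ≥ 2} f̂(S)·ĝ(S) = (1/8)·∑_{1 ≤ i < j ≤ n} ∫_0^∞ (1 − e^{−t})·e^{−t}·E[∂_{ij} f · P_t(∂_{ij} g)] dt. -/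
open Finset MeasureTheory

namespace HSR

variable {n : ℕ}

lemma Ev_const (c : ℝ) : Ev n (fun _ => c) = c := by
  unfold Ev
  rw [Finset.sum_const, Finset.card_univ]
  simp [Fintype.card_fun]

lemma Ev_finset_sum {α : Type*} (A : Finset α) (F : α → (Fin n → Bool) → ℝ) :
    Ev n (fun x => ∑ a ∈ A, F a x) = ∑ a ∈ A, Ev n (F a) := by
  unfold Ev
  rw [← Finset.sum_div, Finset.sum_comm]

lemma Ev_mul_left (c : ℝ) (F : (Fin n → Bool) → ℝ) :
    Ev n (fun x => c * F x) = c * Ev n F := by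
  unfold Ev
  rw [← Finset.mul_sum, mul_div_assoc]

lemma chi_update_of_notMem {S : Finset (Fin n)} {i : Fin n} (h : i ∉ S) (x : Fin n → Bool)
    (b : Bool) : chi n S (Function.update x i b) = chi n S x := by
  unfold chi
  refine Finset.prod_congr rfl fun j hj => ?_
  rw [Function.update_of_ne (by rintro rfl; exact h hj)]

lemma chi_insert {S : Finset (Fin n)} {i : Fin n} (h : i ∉ S) (x : Fin n → Bool) :
    chi n (insert i S) x = (if x i then (-1 : ℝ) else 1) * chi n S x :=
  Finset.prod_insert h

lemma pD_chi (i : Fin n) (S : Finset (Fin n)) :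
    pD n i (chi n S) = fun x => if i ∈ S then -2 * chi n (S.erase i) x else 0 := by
  funext x
  by_cases h : i ∈ S
  · simp only [h, if_true]
    have hni := Finset.notMem_erase i S
    rw [pD]
    conv_lhs => rw [← Finset.insert_erase h]
    rw [chi_insert hni, chi_insert hni, chi_update_of_notMem hni, chi_update_of_notMem hni,
      Function.update_self, Function.update_self]
    norm_num
    ring
  · simp only [h, if_false, pD, chi_update_of_notMem h, sub_self]

lemma pD_finset_sum {α : Type*} (i : Fin n) (A : Finset α) (F : α → (Fin n → Bool) → ℝ) :
    pD n i (fun x => ∑ a ∈ A, F a x) = fun x => ∑ a ∈ A, pD n i (F a) x := by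
  funext x
  simp [pD, Finset.sum_sub_distrib]

lemma pD_mul_left (i : Fin n) (c : ℝ) (F : (Fin n → Bool) → ℝ) :
    pD n i (fun x => c * F x) = fun x => c * pD n i F x := by
  funext x
  simp [pD]
  ring

def flipE (i : Fin n) : (Fin n → Bool) ≃ (Fin n → Bool) where
  toFun x := Function.update x i (!x i)
  invFun x := Function.update x i (!x i)
  left_inv x := by
    funext j
    rcases eq_or_ne j i with rfl | hj
    · simp
    · simp [Function.update_of_ne hj]
  right_inv x := by
    funext j
    rcases eq_or_ne j i with rfl | hj
    · simp
    · simp [Function.update_of_ne hj]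

lemma sum_flip_eq_zero (i : Fin n) (F : (Fin n → Bool) → ℝ)
    (h : ∀ x, F (Function.update x i (!x i)) = -F x) :
    ∑ x : Fin n → Bool, F x = 0 := by
  have h1 : ∑ x : Fin n → Bool, F (flipE i x) = ∑ x : Fin n → Bool, F x :=
    Equiv.sum_comp (flipE i) F
  have h2 : ∑ x : Fin n → Bool, F (flipE i x) = -∑ x : Fin n → Bool, F x := by
    simp only [flipE, Equiv.coe_fn_mk, h, Finset.sum_neg_distrib]
  linarith

lemma chi_flip (S : Finset (Fin n)) (i : Fin n) (x : Fin n → Bool) :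
    chi n S (Function.update x i (!x i)) = (if i ∈ S then (-1 : ℝ) else 1) * chi n S x := by
  by_cases h : i ∈ S
  · rw [if_pos h]
    have hni := Finset.notMem_erase i S
    conv_lhs => rw [← Finset.insert_erase h]
    conv_rhs => rw [← Finset.insert_erase h]
    rw [chi_insert hni, chi_insert hni, chi_update_of_notMem hni, Function.update_self]
    cases hx : x i <;> simp <;> ring
  · rw [if_neg h, one_mul, chi_update_of_notMem h]

lemma chi_mul_self (S : Finset (Fin n)) (x : Fin n → Bool) :
    chi n S x * chi n S x = 1 := by
  unfold chi
  rw [← Finset.prod_mul_distrib]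
  refine Finset.prod_eq_one fun j _ => ?_
  cases x j <;> norm_num

lemma Ev_chi_mul_chi (S T : Finset (Fin n)) :
    Ev n (fun x => chi n S x * chi n T x) = if S = T then 1 else 0 := by
  by_cases h : S = T
  · subst h
    rw [if_pos rfl]
    simp_rw [chi_mul_self]
    exact Ev_const 1
  · rw [if_neg h]
    have hex : ∃ i, ¬(i ∈ S ↔ i ∈ T) := by
      by_contra hc
      push_neg at hc
      exact h (Finset.ext hc)
    obtain ⟨i, hi⟩ := hex
    unfold Ev
    rw [sum_flip_eq_zero i _ fun x => ?_, zero_div]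
    rw [chi_flip, chi_flip]
    by_cases h1 : i ∈ S <;> by_cases h2 : i ∈ T
    · exact absurd (iff_of_true h1 h2) hi
    · simp only [h1, h2, if_true, if_false]; ring
    · simp only [h1, h2, if_true, if_false]; ring
    · exact absurd (iff_of_false h1 h2) hi

lemma sum_chi_mul_chi (x y : Fin n → Bool) :
    ∑ T : Finset (Fin n), chi n T y * chi n T x = if y = x then (2 : ℝ) ^ n else 0 := by
  have key : ∀ T : Finset (Fin n), chi n T y * chi n T x
      = ∏ i ∈ T, ((if y i then (-1 : ℝ) else 1) * (if x i then (-1 : ℝ) else 1)) := fun T =>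
    (Finset.prod_mul_distrib).symm
  simp_rw [key]
  have hp := Finset.prod_add
    (fun i : Fin n => (if y i then (-1 : ℝ) else 1) * (if x i then (-1 : ℝ) else 1))
    (fun _ : Fin n => (1 : ℝ)) Finset.univ
  simp only [Finset.prod_const_one, mul_one, Finset.powerset_univ] at hp
  rw [← hp]
  by_cases hxy : y = x
  · subst hxy
    rw [if_pos rfl]
    have : ∀ i : Fin n, (if y i then (-1 : ℝ) else 1) * (if y i then (-1 : ℝ) else 1) + 1 = 2 := by
      intro i; cases y i <;> norm_num
    simp_rw [this]
    simp [Finset.prod_const]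
  · rw [if_neg hxy]
    have hex : ∃ i, y i ≠ x i := by
      by_contra hc
      push_neg at hc
      exact hxy (funext hc)
    obtain ⟨i, hi⟩ := hex
    refine Finset.prod_eq_zero (Finset.mem_univ i) ?_
    cases hy : y i <;> cases hx : x i <;> simp_all

lemma fourier_inversion (f : (Fin n → Bool) → ℝ) (x : Fin n → Bool) :
    f x = ∑ T : Finset (Fin n), fhat n f T * chi n T x := by
  unfold fhat Ev
  simp_rw [div_mul_eq_mul_div, ← Finset.sum_div, Finset.sum_mul]
  rw [Finset.sum_comm]
  have hs : ∀ y : Fin n → Bool,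
      ∑ T : Finset (Fin n), f y * chi n T y * chi n T x
        = f y * (if y = x then (2 : ℝ) ^ n else 0) := by
    intro y
    rw [← sum_chi_mul_chi x y, Finset.mul_sum]
    simp_rw [mul_assoc]
  simp_rw [hs, mul_ite, mul_zero]
  rw [Finset.sum_ite_eq' Finset.univ x (fun y => f y * (2:ℝ)^n)]
  simp only [Finset.mem_univ, if_true]
  field_simp

end HSR

namespace HSR

variable {n : ℕ}

lemma pD_pD_eq (i j : Fin n) (hij : i ≠ j) (f : (Fin n → Bool) → ℝ) :
    pD n i (pD n j f) = fun x => ∑ T : Finset (Fin n),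
      fhat n f T * (if i ∈ T ∧ j ∈ T then 4 * chi n ((T.erase j).erase i) x else 0) := by
  have h1 : pD n j f = fun x => ∑ T : Finset (Fin n),
      fhat n f T * (if j ∈ T then -2 * chi n (T.erase j) x else 0) := by
    conv_lhs => rw [funext (fourier_inversion f)]
    rw [pD_finset_sum]
    funext x
    refine Finset.sum_congr rfl fun T _ => ?_
    rw [pD_mul_left, pD_chi]
  rw [h1, pD_finset_sum]
  funext x
  refine Finset.sum_congr rfl fun T _ => ?_
  have hmem : i ∈ T.erase j ↔ i ∈ T := by
    rw [Finset.mem_erase]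
    exact ⟨fun h => h.2, fun h => ⟨hij, h⟩⟩
  by_cases hj : j ∈ T
  · have e1 : (fun x => fhat n f T * (if j ∈ T then -2 * chi n (T.erase j) x else 0))
        = fun x => (fhat n f T * -2) * chi n (T.erase j) x := by
      funext y; rw [if_pos hj]; ring
    rw [e1, pD_mul_left, pD_chi]
    by_cases hi : i ∈ T
    · simp only [hmem, hi, hj, if_true, and_self]
      ring
    · simp only [hmem, hi, hj, if_false, false_and, and_true]
      ring
  · have e1 : (fun x => fhat n f T * (if j ∈ T then -2 * chi n (T.erase j) x else 0))
        = fun _ => (0:ℝ) := by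
      funext y; rw [if_neg hj]; ring
    rw [e1]
    rw [if_neg (fun h => hj h.2)]
    simp [pD]

lemma fhat_pD_pD (i j : Fin n) (hij : i ≠ j) (f : (Fin n → Bool) → ℝ) (S : Finset (Fin n)) :
    fhat n (pD n i (pD n j f)) S =
      if i ∈ S ∨ j ∈ S then 0 else 4 * fhat n f (insert i (insert j S)) := by
  rw [pD_pD_eq i j hij]
  have hmul : ∀ x : Fin n → Bool, (∑ T : Finset (Fin n),
      fhat n f T * (if i ∈ T ∧ j ∈ T then 4 * chi n ((T.erase j).erase i) x else 0)) * chi n S x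
    = ∑ T : Finset (Fin n), (if i ∈ T ∧ j ∈ T then
        (4 * fhat n f T) * (chi n ((T.erase j).erase i) x * chi n S x) else 0) := by
    intro x
    rw [Finset.sum_mul]
    refine Finset.sum_congr rfl fun T _ => ?_
    split_ifs <;> ring
  have hfh : fhat n (fun x => ∑ T : Finset (Fin n),
      fhat n f T * (if i ∈ T ∧ j ∈ T then 4 * chi n ((T.erase j).erase i) x else 0)) S
      = Ev n (fun x => ∑ T : Finset (Fin n), (if i ∈ T ∧ j ∈ T then
        (4 * fhat n f T) * (chi n ((T.erase j).erase i) x * chi n S x) else 0)) := by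
    unfold fhat
    congr 1
    funext x
    exact hmul x
  rw [hfh, Ev_finset_sum]
  have hterm : ∀ T : Finset (Fin n),
      Ev n (fun x => if i ∈ T ∧ j ∈ T then
          (4 * fhat n f T) * (chi n ((T.erase j).erase i) x * chi n S x) else 0)
      = if i ∈ T ∧ j ∈ T then
          (4 * fhat n f T) * (if (T.erase j).erase i = S then 1 else 0) else 0 := by
    intro T
    by_cases h : i ∈ T ∧ j ∈ T
    · simp only [if_pos h]
      rw [← Ev_chi_mul_chi]
      exact Ev_mul_left _ _
    · simp only [if_neg h]
      exact Ev_const 0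
  simp_rw [hterm]
  by_cases hS : i ∈ S ∨ j ∈ S
  · rw [if_pos hS]
    refine Finset.sum_eq_zero fun T _ => ?_
    split_ifs with h1 h2
    · exfalso
      rcases hS with hiS | hjS
      · exact (Finset.notMem_erase i _) (h2 ▸ hiS)
      · have hj' : j ∈ (T.erase j).erase i := h2 ▸ hjS
        exact (Finset.notMem_erase j T) (Finset.mem_of_mem_erase hj')
    · exact mul_zero _
    · rfl
  · rw [if_neg hS]
    push_neg at hS
    obtain ⟨hiS, hjS⟩ := hS
    rw [Finset.sum_eq_single (insert i (insert j S))]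
    · have hiT : i ∈ insert i (insert j S) := Finset.mem_insert_self _ _
      have hjT : j ∈ insert i (insert j S) :=
        Finset.mem_insert_of_mem (Finset.mem_insert_self _ _)
      rw [if_pos ⟨hiT, hjT⟩]
      have herase : ((insert i (insert j S)).erase j).erase i = S := by
        ext a
        simp only [Finset.mem_erase, Finset.mem_insert]
        constructor
        · rintro ⟨hai, haj, (rfl | rfl | ha)⟩
          · exact absurd rfl hai
          · exact absurd rfl haj
          · exact ha
        · intro ha
          exact ⟨fun h => hiS (h ▸ ha), fun h => hjS (h ▸ ha), Or.inr (Or.inr ha)⟩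
      rw [herase, if_pos rfl, mul_one]
    · intro T _ hT
      split_ifs with h1 h2
      · exfalso
        apply hT
        obtain ⟨hiT, hjT⟩ := h1
        have hmem : ∀ a : Fin n, a ∈ S ↔ (a ≠ i ∧ a ≠ j ∧ a ∈ T) := by
          intro a
          rw [← h2]
          simp only [Finset.mem_erase]
        ext a
        simp only [Finset.mem_insert, hmem a]
        constructor
        · intro haT
          by_cases hai : a = i
          · exact Or.inl hai
          by_cases haj : a = j
          · exact Or.inr (Or.inl haj)
          · exact Or.inr (Or.inr ⟨hai, haj, haT⟩)
        · rintro (rfl | rfl | ⟨_, _, haT⟩) <;> first | exact hiT | exact hjT | exact haT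
      · exact mul_zero _
      · rfl
    · intro h
      exact absurd (Finset.mem_univ _) h

lemma Ev_mul_heat (t : ℝ) (F G : (Fin n → Bool) → ℝ) :
    Ev n (fun x => F x * heat n t G x) =
      ∑ S : Finset (Fin n), Real.exp (-(t * S.card)) * fhat n F S * fhat n G S := by
  unfold heat
  simp_rw [Finset.mul_sum]
  rw [Ev_finset_sum]
  refine Finset.sum_congr rfl fun S _ => ?_
  have hfun : ∀ x : Fin n → Bool,
      F x * (Real.exp (-(t * S.card)) * fhat n G S * chi n S x)
        = (Real.exp (-(t * S.card)) * fhat n G S) * (F x * chi n S x) := by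
    intro x; ring
  simp_rw [hfun]
  rw [Ev_mul_left]
  unfold fhat
  ring

end HSR

namespace HSR

variable {n : ℕ}

lemma pair_Ev (i j : Fin n) (hij : i ≠ j) (f g : (Fin n → Bool) → ℝ) (t : ℝ) :
    Ev n (fun x => pD n i (pD n j f) x * heat n t (pD n i (pD n j g)) x)
      = ∑ T : Finset (Fin n), (if i ∈ T ∧ j ∈ T then
          Real.exp (-(t * ((T.card : ℝ) - 2))) * (16 * fhat n f T * fhat n g T) else 0) := by
  rw [Ev_mul_heat]
  have hterm : ∀ S : Finset (Fin n),
      Real.exp (-(t * S.card)) * fhat n (pD n i (pD n j f)) S * fhat n (pD n i (pD n j g)) S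
      = if ¬(i ∈ S ∨ j ∈ S) then Real.exp (-(t * S.card)) *
          (16 * fhat n f (insert i (insert j S)) * fhat n g (insert i (insert j S))) else 0 := by
    intro S
    rw [fhat_pD_pD i j hij, fhat_pD_pD i j hij]
    by_cases h : i ∈ S ∨ j ∈ S
    · rw [if_pos h, if_pos h, if_neg (not_not.mpr h)]
      ring
    · rw [if_neg h, if_neg h, if_pos h]
      ring
  simp_rw [hterm]
  rw [← Finset.sum_filter, ← Finset.sum_filter]
  refine Finset.sum_nbij' (fun S => insert i (insert j S)) (fun T => (T.erase j).erase i)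
    ?_ ?_ ?_ ?_ ?_
  · intro S hS
    rw [Finset.mem_filter] at hS ⊢
    exact ⟨Finset.mem_univ _, Finset.mem_insert_self _ _,
      Finset.mem_insert_of_mem (Finset.mem_insert_self _ _)⟩
  · intro T hT
    rw [Finset.mem_filter] at hT ⊢
    refine ⟨Finset.mem_univ _, ?_⟩
    rintro (hi | hj)
    · exact (Finset.notMem_erase i _) hi
    · exact (Finset.notMem_erase j _) (Finset.mem_of_mem_erase hj)
  · intro S hS
    rw [Finset.mem_filter] at hS
    push_neg at hS
    obtain ⟨-, hiS, hjS⟩ := hS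
    ext a
    simp only [Finset.mem_erase, Finset.mem_insert]
    constructor
    · rintro ⟨hai, haj, (rfl | rfl | ha)⟩
      · exact absurd rfl hai
      · exact absurd rfl haj
      · exact ha
    · intro ha
      exact ⟨fun h => hiS (h ▸ ha), fun h => hjS (h ▸ ha), Or.inr (Or.inr ha)⟩
  · intro T hT
    rw [Finset.mem_filter] at hT
    obtain ⟨-, hiT, hjT⟩ := hT
    ext a
    simp only [Finset.mem_insert, Finset.mem_erase]
    constructor
    · rintro (rfl | rfl | ⟨-, -, ha⟩)
      · exact hiT
      · exact hjT
      · exact ha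
    · intro ha
      by_cases hai : a = i
      · exact Or.inl hai
      by_cases haj : a = j
      · exact Or.inr (Or.inl haj)
      · exact Or.inr (Or.inr ⟨hai, haj, ha⟩)
  · intro S hS
    rw [Finset.mem_filter] at hS
    push_neg at hS
    obtain ⟨-, hiS, hjS⟩ := hS
    have hcard : (insert i (insert j S)).card = S.card + 2 := by
      rw [Finset.card_insert_of_notMem, Finset.card_insert_of_notMem hjS]
      intro h
      rcases Finset.mem_insert.mp h with h' | h'
      · exact hij h'
      · exact hiS h'
    rw [hcard]
    have harg : ((S.card + 2 : ℕ) : ℝ) - 2 = (S.card : ℝ) := by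
      push_cast; ring
    rw [harg]

lemma integral_exp_neg_mul_Ioi' {b : ℝ} (hb : 0 < b) :
    ∫ t in Set.Ioi (0 : ℝ), Real.exp (-b * t) = 1 / b := by
  have h := Real.integral_rpow_mul_exp_neg_mul_Ioi (zero_lt_one) hb
  simp only [sub_self, Real.rpow_zero, one_mul, Real.rpow_one, Real.Gamma_one, mul_one] at h
  rw [← h]
  simp_rw [neg_mul]

lemma pair_integral (i j : Fin n) (hij : i ≠ j) (f g : (Fin n → Bool) → ℝ) :
    (∫ t in Set.Ioi (0 : ℝ), (1 - Real.exp (-t)) * Real.exp (-t) *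
        Ev n (fun x => pD n i (pD n j f) x * heat n t (pD n i (pD n j g)) x))
      = ∑ T : Finset (Fin n), (if i ∈ T ∧ j ∈ T then
          (1 / ((T.card : ℝ) - 1) - 1 / (T.card : ℝ)) * (16 * fhat n f T * fhat n g T)
          else 0) := by
  have hint : ∀ t : ℝ, (1 - Real.exp (-t)) * Real.exp (-t) *
      Ev n (fun x => pD n i (pD n j f) x * heat n t (pD n i (pD n j g)) x)
      = ∑ T : Finset (Fin n), (if i ∈ T ∧ j ∈ T then
          (Real.exp (-((T.card : ℝ) - 1) * t) - Real.exp (-(T.card : ℝ) * t)) *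
            (16 * fhat n f T * fhat n g T) else 0) := by
    intro t
    rw [pair_Ev i j hij, Finset.mul_sum]
    refine Finset.sum_congr rfl fun T _ => ?_
    by_cases h : i ∈ T ∧ j ∈ T
    · rw [if_pos h, if_pos h]
      set m : ℝ := (T.card : ℝ)
      have h1 : Real.exp (-t) * Real.exp (-(t * (m - 2))) = Real.exp (-(m - 1) * t) := by
        rw [← Real.exp_add]; congr 1; ring
      have h2 : Real.exp (-t) * Real.exp (-(m - 1) * t) = Real.exp (-m * t) := by
        rw [← Real.exp_add]; congr 1; ring
      calc (1 - Real.exp (-t)) * Real.exp (-t) *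
            (Real.exp (-(t * (m - 2))) * (16 * fhat n f T * fhat n g T))
          = (Real.exp (-t) * Real.exp (-(t * (m - 2)))
              - Real.exp (-t) * (Real.exp (-t) * Real.exp (-(t * (m - 2)))))
              * (16 * fhat n f T * fhat n g T) := by ring
        _ = (Real.exp (-(m - 1) * t) - Real.exp (-m * t)) * (16 * fhat n f T * fhat n g T) := by
              rw [h1, h2]
    · rw [if_neg h, if_neg h, mul_zero]
  simp_rw [hint]
  have hintg : ∀ T : Finset (Fin n), T ∈ (Finset.univ : Finset (Finset (Fin n))) →
      IntegrableOn (fun t : ℝ => if i ∈ T ∧ j ∈ T then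
          (Real.exp (-((T.card : ℝ) - 1) * t) - Real.exp (-(T.card : ℝ) * t)) *
            (16 * fhat n f T * fhat n g T) else 0) (Set.Ioi (0 : ℝ)) := by
    intro T _
    by_cases h : i ∈ T ∧ j ∈ T
    · simp only [if_pos h]
      have h2 : 2 ≤ T.card := Finset.one_lt_card.mpr ⟨i, h.1, j, h.2, hij⟩
      have hm : (2 : ℝ) ≤ (T.card : ℝ) := by exact_mod_cast h2
      exact (((exp_neg_integrableOn_Ioi 0 (by linarith)).sub
        (exp_neg_integrableOn_Ioi 0 (by linarith))).mul_const _)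
    · simp only [if_neg h]
      exact integrableOn_zero
  rw [MeasureTheory.integral_finset_sum _ hintg]
  refine Finset.sum_congr rfl fun T _ => ?_
  by_cases h : i ∈ T ∧ j ∈ T
  · simp only [if_pos h]
    have h2 : 2 ≤ T.card := Finset.one_lt_card.mpr ⟨i, h.1, j, h.2, hij⟩
    have hm : (2 : ℝ) ≤ (T.card : ℝ) := by exact_mod_cast h2
    have hm1 : 0 < (T.card : ℝ) - 1 := by linarith
    have hm0 : 0 < (T.card : ℝ) := by linarith
    rw [MeasureTheory.integral_mul_const, MeasureTheory.integral_sub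
      (exp_neg_integrableOn_Ioi 0 hm1) (exp_neg_integrableOn_Ioi 0 hm0),
      integral_exp_neg_mul_Ioi' hm1, integral_exp_neg_mul_Ioi' hm0]
  · simp only [if_neg h]
    simp

end HSR

namespace HSR

variable {n : ℕ}

lemma count_pairs (T : Finset (Fin n)) :
    (∑ i : Fin n, ∑ j ∈ Finset.univ.filter (fun j : Fin n => i < j),
        (if i ∈ T ∧ j ∈ T then (1 : ℝ) else 0)) * 2
      = (T.card : ℝ) * ((T.card : ℝ) - 1) := by
  have step1 : (∑ i : Fin n, ∑ j ∈ Finset.univ.filter (fun j : Fin n => i < j),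
        (if i ∈ T ∧ j ∈ T then (1 : ℝ) else 0))
      = ∑ i ∈ T, ∑ j ∈ T, (if i < j then (1 : ℝ) else 0) := by
    have h1 : ∀ i : Fin n, (∑ j ∈ Finset.univ.filter (fun j : Fin n => i < j),
          (if i ∈ T ∧ j ∈ T then (1 : ℝ) else 0))
        = if i ∈ T then (∑ j ∈ T, if i < j then (1:ℝ) else 0) else 0 := by
      intro i
      by_cases hi : i ∈ T
      · rw [if_pos hi, Finset.sum_filter]
        have hh : ∀ j : Fin n, (if i < j then (if i ∈ T ∧ j ∈ T then (1:ℝ) else 0) else 0)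
            = if j ∈ T then (if i < j then (1:ℝ) else 0) else 0 := by
          intro j
          split_ifs <;> simp_all
        simp_rw [hh]
        rw [← Finset.sum_filter, Finset.filter_mem_eq_inter, Finset.univ_inter]
      · rw [if_neg hi]
        refine Finset.sum_eq_zero fun j _ => ?_
        rw [if_neg (fun h => hi h.1)]
    simp_rw [h1]
    rw [← Finset.sum_filter, Finset.filter_mem_eq_inter, Finset.univ_inter]
  rw [step1]
  have hdouble : (∑ i ∈ T, ∑ j ∈ T, (if i < j then (1 : ℝ) else 0))
      = ∑ i ∈ T, ∑ j ∈ T, (if j < i then (1 : ℝ) else 0) := by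
    rw [Finset.sum_comm]
  have key : (∑ i ∈ T, ∑ j ∈ T, (if i < j then (1 : ℝ) else 0)) * 2
      = ∑ i ∈ T, ∑ j ∈ T, (if i = j then (0:ℝ) else 1) := by
    rw [mul_two]
    nth_rewrite 2 [hdouble]
    rw [← Finset.sum_add_distrib]
    refine Finset.sum_congr rfl fun i _ => ?_
    rw [← Finset.sum_add_distrib]
    refine Finset.sum_congr rfl fun j _ => ?_
    rcases lt_trichotomy i j with h | h | h
    · simp [h, not_lt.mpr h.le, h.ne]
    · simp [h]
    · simp [h, not_lt.mpr h.le, h.ne']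
  rw [key]
  have inner : ∀ i ∈ T, (∑ j ∈ T, (if i = j then (0:ℝ) else 1)) = (T.card : ℝ) - 1 := by
    intro i hi
    have : (∑ j ∈ T, (if i = j then (0:ℝ) else 1))
        = ∑ j ∈ T, ((1:ℝ) - if i = j then 1 else 0) := by
      refine Finset.sum_congr rfl fun j _ => ?_
      split_ifs <;> norm_num
    rw [this, Finset.sum_sub_distrib, Finset.sum_const, Finset.sum_ite_eq T i (fun _ => (1:ℝ)),
      if_pos hi]
    simp [mul_comm]
  rw [Finset.sum_congr rfl inner, Finset.sum_const]
  simp [mul_comm]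

end HSR

/-- Heat-semigroup representation of the level-`≥ 2` Fourier weight
via second discrete derivatives `∂_{ij}`. -/
theorem heat_semigroup_representation_partial (n : ℕ) (f g : (Fin n → Bool) → ℝ) :
    ∑ S ∈ Finset.univ.filter (fun S : Finset (Fin n) => 2 ≤ S.card),
        fhat n f S * fhat n g S
    = (1 / 8) * ∑ i : Fin n, ∑ j ∈ Finset.univ.filter (fun j : Fin n => i < j),
        ∫ t in Set.Ioi (0 : ℝ), (1 - Real.exp (-t)) * Real.exp (-t) *
          Ev n (fun x => pD n i (pD n j f) x * heat n t (pD n i (pD n j g)) x) := by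
  have hpair : ∀ i : Fin n, (∑ j ∈ Finset.univ.filter (fun j : Fin n => i < j),
      ∫ t in Set.Ioi (0 : ℝ), (1 - Real.exp (-t)) * Real.exp (-t) *
        Ev n (fun x => pD n i (pD n j f) x * heat n t (pD n i (pD n j g)) x))
      = ∑ j ∈ Finset.univ.filter (fun j : Fin n => i < j), ∑ T : Finset (Fin n),
          (if i ∈ T ∧ j ∈ T then
            (1 / ((T.card : ℝ) - 1) - 1 / (T.card : ℝ)) * (16 * fhat n f T * fhat n g T)
            else 0) := by
    intro i
    refine Finset.sum_congr rfl fun j hj => ?_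
    rw [Finset.mem_filter] at hj
    exact HSR.pair_integral i j hj.2.ne f g
  simp_rw [hpair]
  have hswap : (∑ i : Fin n, ∑ j ∈ Finset.univ.filter (fun j : Fin n => i < j),
        ∑ T : Finset (Fin n), (if i ∈ T ∧ j ∈ T then
          (1 / ((T.card : ℝ) - 1) - 1 / (T.card : ℝ)) * (16 * fhat n f T * fhat n g T) else 0))
      = ∑ T : Finset (Fin n), ∑ i : Fin n, ∑ j ∈ Finset.univ.filter (fun j : Fin n => i < j),
          (if i ∈ T ∧ j ∈ T then
            (1 / ((T.card : ℝ) - 1) - 1 / (T.card : ℝ)) * (16 * fhat n f T * fhat n g T)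
            else 0) := by
    rw [Finset.sum_comm]
    refine Finset.sum_congr rfl fun T _ => Finset.sum_comm
  rw [hswap, Finset.mul_sum, Finset.sum_filter]
  refine Finset.sum_congr rfl fun T _ => ?_
  have hfact : ∀ (i j : Fin n), (if i ∈ T ∧ j ∈ T then
        (1 / ((T.card : ℝ) - 1) - 1 / (T.card : ℝ)) * (16 * fhat n f T * fhat n g T) else 0)
      = ((1 / ((T.card : ℝ) - 1) - 1 / (T.card : ℝ)) * (16 * fhat n f T * fhat n g T)) *
          (if i ∈ T ∧ j ∈ T then (1 : ℝ) else 0) := by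
    intro i j
    split_ifs <;> ring
  simp_rw [hfact, ← Finset.mul_sum]
  by_cases h2 : 2 ≤ T.card
  · rw [if_pos h2]
    have hm : (2 : ℝ) ≤ (T.card : ℝ) := by exact_mod_cast h2
    have hc := HSR.count_pairs T
    have hm1 : ((T.card : ℝ) - 1) ≠ 0 := ne_of_gt (by linarith)
    have hm0 : (T.card : ℝ) ≠ 0 := ne_of_gt (by linarith)
    have hN : (∑ i : Fin n, ∑ j ∈ Finset.univ.filter (fun j : Fin n => i < j),
        (if i ∈ T ∧ j ∈ T then (1 : ℝ) else 0)) = (T.card : ℝ) * ((T.card : ℝ) - 1) / 2 := by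
      linarith
    rw [hN]
    field_simp
    ring
  · rw [if_neg h2]
    have hzero : (∑ i : Fin n, ∑ j ∈ Finset.univ.filter (fun j : Fin n => i < j),
        (if i ∈ T ∧ j ∈ T then (1 : ℝ) else 0)) = 0 := by
      refine Finset.sum_eq_zero fun i _ => Finset.sum_eq_zero fun j hj => ?_
      rw [Finset.mem_filter] at hj
      rw [if_neg]
      rintro ⟨hiT, hjT⟩
      exact h2 (Finset.one_lt_card.mpr ⟨i, hiT, j, hjT, hj.2.ne⟩)
    rw [hzero, mul_zero, mul_zero]
end

section
/- Let f, g : {0,1}^n → ℝ be increasing. Then |E[fg] − E[f]E[g] − (1/4)·∑_{i=1}^n Inf_i^{(1)}[f]·Inf_i^{(1)}[g]| ≤ (9/8)·∑_{1 ≤ i < j ≤ n} (‖∂_{ij} f‖_2 · ‖∂_{ij} g‖_2) / (1 + log( (‖∂_{ij} f‖_2 · ‖∂_{ij} g‖_2) / (‖∂_{ij} f‖_1 · ‖∂_{ij} g‖_1) )), where Inf_i^{(1)}[h] = E[|∂_i h|], and terms with ∂_{ij} f ≡ 0 or ∂_{ij} g ≡ 0 are interpreted as zero. -/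
open Finset MeasureTheory

/-!
In the Walsh basis the covariance minus the level-one term is `∑_{|S| ≥ 2} f̂(S) ĝ(S)`; for
increasing `f` one has `Inf_i^{(1)}[f] = E[∂ᵢf] = -2 f̂({i})`. Sharing each `S` among its
`(|S| choose 2)` pairs `i < j`, and using that `∂ᵢ∂ⱼf` has coefficients `4 f̂(S ∪ {i, j})`, the
pair `(i, j)` contributes `(1/16) ∑_S û(S) v̂(S) / (|S| + 2 choose 2)` with `u = ∂ᵢ∂ⱼf`,
`v = ∂ᵢ∂ⱼg`.

Split this sum at level `d = ⌊√(1 + L)⌋`, where `L = log (‖u‖₂‖v‖₂ / (‖u‖₁‖v‖₁))`. Above level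
`d` the weights are at most `2 / (1 + L)` and `∑ |û| |v̂| ≤ ‖u‖₂‖v‖₂` by Cauchy–Schwarz. Up to
level `d` the sum is at most `3^d √(‖u‖₂‖u‖₁‖v‖₂‖v‖₁) = 3^d e^{-L/2} ‖u‖₂‖v‖₂` by the level-`d`
inequality, which comes from the Bonami bound `E[h⁴] ≤ 9^d E[h²]²` for `h` of degree at most `d`,
and `(1 + L) 3^d ≤ 16 e^{L/2}`. Hence each pair contributes at most
`(16 + 2) / 16 · ‖u‖₂‖v‖₂ / (1 + L)`.
-/

open Function

namespace BooleanCube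

variable {n : ℕ}

section Expectation

lemma Ev_add (f g : (Fin n → Bool) → ℝ) : Ev n (fun x => f x + g x) = Ev n f + Ev n g := by
  simp only [Ev, sum_add_distrib, add_div]

lemma Ev_const_mul (c : ℝ) (f : (Fin n → Bool) → ℝ) : Ev n (fun x => c * f x) = c * Ev n f := by
  simp only [Ev, ← mul_sum, mul_div_assoc]

lemma Ev_const (c : ℝ) : Ev n (fun _ => c) = c := by
  simp [Ev]

lemma Ev_sum {ι : Type*} (s : Finset ι) (F : ι → (Fin n → Bool) → ℝ) :
    Ev n (fun x => ∑ k ∈ s, F k x) = ∑ k ∈ s, Ev n (F k) := by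
  simp only [Ev, ← sum_div]
  rw [sum_comm]

lemma Ev_nonneg {f : (Fin n → Bool) → ℝ} (h : ∀ x, 0 ≤ f x) : 0 ≤ Ev n f :=
  div_nonneg (sum_nonneg fun x _ => h x) (by positivity)

lemma Ev_mono {f g : (Fin n → Bool) → ℝ} (h : ∀ x, f x ≤ g x) : Ev n f ≤ Ev n g :=
  div_le_div_of_nonneg_right (sum_le_sum fun x _ => h x) (by positivity)

lemma Ev_eq_zero_iff_of_nonneg {f : (Fin n → Bool) → ℝ} (h : ∀ x, 0 ≤ f x) :
    Ev n f = 0 ↔ ∀ x, f x = 0 := by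
  simp [Ev, sum_eq_zero_iff_of_nonneg fun x _ => h x]

lemma Ev_mul_le_sqrt_mul_sqrt (f g : (Fin n → Bool) → ℝ) :
    Ev n (fun x => f x * g x) ≤ √(Ev n (fun x => f x ^ 2)) * √(Ev n (fun x => g x ^ 2)) := by
  have h2n : (0 : ℝ) < 2 ^ n := by positivity
  calc Ev n (fun x => f x * g x)
      ≤ √(∑ x, f x ^ 2) * √(∑ x, g x ^ 2) / 2 ^ n :=
        div_le_div_of_nonneg_right (Real.sum_mul_le_sqrt_mul_sqrt _ _ _) h2n.le
    _ = √(Ev n (fun x => f x ^ 2)) * √(Ev n (fun x => g x ^ 2)) := by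
        rw [Ev, Ev, Real.sqrt_div' _ h2n.le, Real.sqrt_div' _ h2n.le, div_mul_div_comm,
          Real.mul_self_sqrt h2n.le]

lemma sum_update_not (i : Fin n) (F : (Fin n → Bool) → ℝ) :
    ∑ x, F (update x i (!x i)) = ∑ x, F x := by
  have hinv : Involutive fun x : Fin n → Bool => update x i (!x i) := fun x => by simp
  exact Fintype.sum_equiv hinv.toPerm _ _ fun _ => rfl

noncomputable def coordAvg (i : Fin n) (F : (Fin n → Bool) → ℝ) (x : Fin n → Bool) : ℝ :=
  (F (update x i false) + F (update x i true)) / 2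

lemma Ev_coordAvg (i : Fin n) (F : (Fin n → Bool) → ℝ) : Ev n (coordAvg i F) = Ev n F := by
  have hpair (x : Fin n → Bool) : F x + F (update x i (!x i)) = 2 * coordAvg i F x := by
    rw [coordAvg, mul_div_cancel₀ _ two_ne_zero]
    conv_lhs => rw [← update_eq_self i x]
    cases x i <;> simp [add_comm]
  have hsum : ∑ x, coordAvg i F x = ∑ x, F x := by
    have h2 : 2 * ∑ x, coordAvg i F x = 2 * ∑ x, F x := by
      rw [mul_sum, two_mul]
      nth_rewrite 2 [← sum_update_not i F]
      rw [← sum_add_distrib]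
      exact (sum_congr rfl fun x _ => hpair x).symm
    linarith
  rw [Ev, Ev, hsum]

end Expectation

section Fourier

lemma chi_update_of_notMem {S : Finset (Fin n)} {i : Fin n} (h : i ∉ S) (x : Fin n → Bool)
    (b : Bool) : chi n S (update x i b) = chi n S x :=
  prod_congr rfl fun j hj => by rw [update_of_ne (ne_of_mem_of_not_mem hj h)]

lemma chi_insert {S : Finset (Fin n)} {i : Fin n} (h : i ∉ S) (x : Fin n → Bool) :
    chi n (insert i S) x = (if x i then -1 else 1) * chi n S x :=
  prod_insert h

lemma chi_update_true_of_mem {S : Finset (Fin n)} {i : Fin n} (h : i ∈ S) (x : Fin n → Bool) :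
    chi n S (update x i true) = -chi n S (update x i false) := by
  rw [← insert_erase h, chi_insert (notMem_erase i S), chi_insert (notMem_erase i S),
    chi_update_of_notMem (notMem_erase i S), chi_update_of_notMem (notMem_erase i S)]
  simp

lemma fhat_empty (f : (Fin n → Bool) → ℝ) : fhat n f ∅ = Ev n f := by
  simp [fhat, chi]

lemma fhat_eq_zero_of_update_eq {k : (Fin n → Bool) → ℝ} {i : Fin n} {S : Finset (Fin n)}
    (hk : ∀ x b, k (update x i b) = k x) (hi : i ∈ S) : fhat n k S = 0 := by
  rw [fhat, ← Ev_coordAvg i]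
  simp [coordAvg, hk, chi_update_true_of_mem hi, Ev]

lemma Ev_chi_mul_chi (S T : Finset (Fin n)) :
    Ev n (fun x => chi n S x * chi n T x) = if S = T then 1 else 0 := by
  split_ifs with hST
  · subst hST
    convert Ev_const (n := n) 1 with x
    simp only [chi, ← prod_mul_distrib]
    exact prod_eq_one fun i _ => by split_ifs <;> norm_num
  · obtain ⟨i, hiT, hiS⟩ | ⟨i, hiS, hiT⟩ : (∃ i ∈ T, i ∉ S) ∨ ∃ i ∈ S, i ∉ T := by
      by_contra! h
      exact hST (Subset.antisymm h.2 h.1)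
    · exact fhat_eq_zero_of_update_eq (chi_update_of_notMem hiS) hiT
    · simp_rw [mul_comm (chi n S _)]
      exact fhat_eq_zero_of_update_eq (chi_update_of_notMem hiT) hiS

lemma sum_chi_mul_chi (x y : Fin n → Bool) :
    ∑ S, chi n S x * chi n S y = if x = y then 2 ^ n else 0 := by
  have hsign (a b : Bool) :
      ((if a then -1 else 1) * (if b then -1 else 1) + 1 : ℝ) = if a = b then 2 else 0 := by
    cases a <;> cases b <;> norm_num
  simp only [chi, ← prod_mul_distrib]
  rw [← powerset_univ, ← prod_add_one, prod_congr rfl fun i _ => hsign (x i) (y i),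
    prod_ite_zero]
  simp [funext_iff]

lemma fourier_inversion (f : (Fin n → Bool) → ℝ) (x : Fin n → Bool) :
    ∑ S, fhat n f S * chi n S x = f x := by
  simp only [fhat, Ev, div_mul_eq_mul_div, ← sum_div, sum_mul]
  rw [sum_comm]
  simp_rw [mul_assoc, ← mul_sum, sum_chi_mul_chi]
  simp

lemma eq_fhat_empty_of_fhat_eq_zero {h : (Fin n → Bool) → ℝ}
    (hS : ∀ S, S ≠ ∅ → fhat n h S = 0) (x : Fin n → Bool) : h x = fhat n h ∅ := by
  rw [← fourier_inversion h x, sum_eq_single ∅ (fun S _ hS' => by rw [hS S hS', zero_mul])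
    (by simp)]
  simp [chi]

lemma Ev_mul_sum_chi (f : (Fin n → Bool) → ℝ) (s : Finset (Finset (Fin n)))
    (c : Finset (Fin n) → ℝ) :
    Ev n (fun x => f x * ∑ S ∈ s, c S * chi n S x) = ∑ S ∈ s, c S * fhat n f S := by
  simp_rw [mul_sum, mul_left_comm (f _)]
  rw [Ev_sum]
  exact sum_congr rfl fun S _ => Ev_const_mul _ _

lemma fhat_sum_chi (s : Finset (Finset (Fin n))) (c : Finset (Fin n) → ℝ) (T : Finset (Fin n)) :
    fhat n (fun x => ∑ S ∈ s, c S * chi n S x) T = if T ∈ s then c T else 0 := by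
  have hT : fhat n (fun x => ∑ S ∈ s, c S * chi n S x) T
      = Ev n (fun x => chi n T x * ∑ S ∈ s, c S * chi n S x) := by
    simp only [fhat, mul_comm]
  rw [hT, Ev_mul_sum_chi]
  simp [fhat, Ev_chi_mul_chi]

lemma parseval (f g : (Fin n → Bool) → ℝ) :
    Ev n (fun x => f x * g x) = ∑ S, fhat n f S * fhat n g S := by
  simp_rw [← fourier_inversion g, Ev_mul_sum_chi, mul_comm]

lemma plancherel (f : (Fin n → Bool) → ℝ) :
    Ev n (fun x => f x ^ 2) = ∑ S, fhat n f S ^ 2 := by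
  simp_rw [sq, parseval]

end Fourier

section Derivative

lemma pD_update (f : (Fin n → Bool) → ℝ) (i : Fin n) (x : Fin n → Bool) (b : Bool) :
    pD n i f (update x i b) = pD n i f x := by
  simp [pD]

lemma fhat_pD (f : (Fin n → Bool) → ℝ) (i : Fin n) (S : Finset (Fin n)) :
    fhat n (pD n i f) S = if i ∈ S then 0 else -2 * fhat n f (insert i S) := by
  split_ifs with hi
  · exact fhat_eq_zero_of_update_eq (pD_update f i) hi
  · rw [fhat, fhat, ← Ev_coordAvg i (fun x => f x * chi n (insert i S) x), ← Ev_const_mul]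
    congr 1 with x
    simp [coordAvg, chi_insert hi, chi_update_of_notMem hi, pD]
    ring

lemma pD_nonneg {f : (Fin n → Bool) → ℝ} (hf : Increasing' n f) (i : Fin n)
    (x : Fin n → Bool) : 0 ≤ pD n i f x := by
  refine sub_nonneg.2 (hf _ _ fun k => ?_)
  rcases eq_or_ne k i with rfl | hk
  · simp
  · simp [update_of_ne hk]

lemma Inf1_eq_neg_two_mul_fhat {f : (Fin n → Bool) → ℝ} (hf : Increasing' n f) (i : Fin n) :
    Inf1 n i f = -2 * fhat n f {i} := by
  have h := fhat_pD f i ∅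
  rw [if_neg (notMem_empty i), fhat_empty, insert_empty] at h
  rw [Inf1, ← h]
  simp_rw [abs_of_nonneg (pD_nonneg hf i _)]

end Derivative

section Hypercontractivity

lemma fhat_coordAvg (i : Fin n) (h : (Fin n → Bool) → ℝ) (S : Finset (Fin n)) :
    fhat n (coordAvg i h) S = if i ∈ S then 0 else fhat n h S := by
  split_ifs with hi
  · exact fhat_eq_zero_of_update_eq (fun x b => by simp [coordAvg]) hi
  · rw [fhat, fhat, ← Ev_coordAvg i (fun x => h x * chi n S x)]
    congr 1 with x
    simp only [coordAvg, chi_update_of_notMem hi]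
    ring

lemma fhat_half_pD (i : Fin n) (h : (Fin n → Bool) → ℝ) (S : Finset (Fin n)) :
    fhat n (fun x => pD n i h x / 2) S = if i ∈ S then 0 else -fhat n h (insert i S) := by
  have : fhat n (fun x => pD n i h x / 2) S = 2⁻¹ * fhat n (pD n i h) S := by
    rw [fhat, fhat, ← Ev_const_mul]
    congr 1 with x
    ring
  rw [this, fhat_pD]
  split_ifs <;> ring

lemma Ev_sq_eq_coordAvg_add_half_pD (i : Fin n) (h : (Fin n → Bool) → ℝ) :
    Ev n (fun x => h x ^ 2)
      = Ev n (fun x => coordAvg i h x ^ 2) + Ev n (fun x => (pD n i h x / 2) ^ 2) := by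
  rw [← Ev_coordAvg i (fun x => h x ^ 2), ← Ev_add]
  congr 1 with x
  simp only [coordAvg, pD]
  ring

lemma Ev_pow_four_eq_coordAvg_add_half_pD (i : Fin n) (h : (Fin n → Bool) → ℝ) :
    Ev n (fun x => h x ^ 4)
      = Ev n (fun x => coordAvg i h x ^ 4)
        + 6 * Ev n (fun x => coordAvg i h x ^ 2 * (pD n i h x / 2) ^ 2)
        + Ev n (fun x => (pD n i h x / 2) ^ 4) := by
  rw [← Ev_coordAvg i (fun x => h x ^ 4), ← Ev_const_mul, ← Ev_add, ← Ev_add]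
  congr 1 with x
  simp only [coordAvg, pD]
  ring

lemma quartic_le_of_le_sqrt_mul_sqrt {P Q E X Y K : ℝ} (hX : 0 ≤ X) (hY : 0 ≤ Y) (hK : 0 ≤ K)
    (hP : P ≤ K * X ^ 2) (hQ : 9 * Q ≤ K * Y ^ 2) (hE : E ≤ √P * √Q) :
    P + 6 * E + Q ≤ K * (X + Y) ^ 2 := by
  have hsP : √P ≤ √K * X := (Real.sqrt_le_sqrt hP).trans_eq (by
    rw [Real.sqrt_mul hK, Real.sqrt_sq hX])
  have hsQ : 3 * √Q ≤ √K * Y := by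
    have h := Real.sqrt_le_sqrt hQ
    rwa [Real.sqrt_mul (by norm_num), Real.sqrt_mul hK, Real.sqrt_sq hY,
      show (9 : ℝ) = 3 ^ 2 by norm_num, Real.sqrt_sq (by norm_num)] at h
  have hE' : 3 * E ≤ K * X * Y := by
    calc 3 * E ≤ √P * (3 * √Q) := by linarith
      _ ≤ (√K * X) * (√K * Y) := mul_le_mul hsP hsQ (by positivity) (by positivity)
      _ = K * X * Y := by rw [mul_mul_mul_comm, Real.mul_self_sqrt hK, mul_assoc]
  nlinarith [mul_nonneg hK (sq_nonneg Y)]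

/-- Bonami's lemma, by induction on the set `T` of coordinates carrying the spectrum of `h`: on
the halves `xᵢ = 0, 1` one has `h = a ∓ b`, where `a = coordAvg i h` has degree `≤ d`, and
`b = ∂ᵢh / 2` has degree `≤ d - 1`; neither depends on `xᵢ`. -/
theorem Ev_pow_four_le_of_fhat_support (T : Finset (Fin n)) (d : ℕ) (h : (Fin n → Bool) → ℝ)
    (hsupp : ∀ S, fhat n h S ≠ 0 → S ⊆ T ∧ #S ≤ d) :
    Ev n (fun x => h x ^ 4) ≤ 9 ^ d * Ev n (fun x => h x ^ 2) ^ 2 := by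
  induction T using Finset.induction_on generalizing d h with
  | empty =>
    have hconst (x : Fin n → Bool) : h x = fhat n h ∅ :=
      eq_fhat_empty_of_fhat_eq_zero (fun S hS => by_contra fun hne =>
        hS (subset_empty.1 (hsupp S hne).1)) x
    simp only [hconst, Ev_const]
    nlinarith [one_le_pow₀ (M₀ := ℝ) (a := 9) (n := d) (by norm_num), sq_nonneg (fhat n h ∅ ^ 2)]
  | insert i T _ ih =>
    have ha (S) (hS : fhat n (coordAvg i h) S ≠ 0) : S ⊆ T ∧ #S ≤ d := by
      rw [fhat_coordAvg] at hS
      split_ifs at hS with hiS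
      · exact absurd rfl hS
      · exact (hsupp S hS).imp_left (subset_insert_iff_of_notMem hiS).1
    have hb (S) (hS : fhat n (fun x => pD n i h x / 2) S ≠ 0) : S ⊆ T ∧ #S + 1 ≤ d := by
      rw [fhat_half_pD] at hS
      split_ifs at hS with hiS
      · exact absurd rfl hS
      · obtain ⟨hsub, hcard⟩ := hsupp _ (neg_ne_zero.1 hS)
        rw [card_insert_of_notMem hiS] at hcard
        exact ⟨(subset_insert_iff_of_notMem hiS).1 ((subset_insert i S).trans hsub), hcard⟩
    have hQ : 9 * Ev n (fun x => (pD n i h x / 2) ^ 4)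
        ≤ 9 ^ d * Ev n (fun x => (pD n i h x / 2) ^ 2) ^ 2 := by
      cases d with
      | zero =>
        have hfhat (S : Finset (Fin n)) : fhat n (fun x => pD n i h x / 2) S = 0 :=
          by_contra fun hS => absurd (hb S hS).2 (by omega)
        have hzero (x : Fin n → Bool) : pD n i h x / 2 = 0 := by
          rw [eq_fhat_empty_of_fhat_eq_zero (fun S _ => hfhat S) x, hfhat]
        simp [hzero, Ev_const]
      | succ d =>
        rw [pow_succ', mul_assoc]
        exact mul_le_mul_of_nonneg_left (ih d _ fun S hS => (hb S hS).imp_right (by omega))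
          (by norm_num)
    rw [Ev_pow_four_eq_coordAvg_add_half_pD i, Ev_sq_eq_coordAvg_add_half_pD i]
    refine quartic_le_of_le_sqrt_mul_sqrt (Ev_nonneg fun x => sq_nonneg _)
      (Ev_nonneg fun x => sq_nonneg _) (by positivity) (ih d _ ha) hQ ?_
    have hcs := Ev_mul_le_sqrt_mul_sqrt (fun x => coordAvg i h x ^ 2)
      (fun x => (pD n i h x / 2) ^ 2)
    simp only [← pow_mul, Nat.reduceMul] at hcs
    exact hcs

end Hypercontractivity

section LevelInequality

lemma nrm_nonneg (p : ℝ) (u : (Fin n → Bool) → ℝ) : 0 ≤ nrm n p u :=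
  Real.rpow_nonneg (Ev_nonneg fun x => by positivity) _

lemma nrm_one_eq (u : (Fin n → Bool) → ℝ) : nrm n 1 u = Ev n (fun x => |u x|) := by
  simp [nrm]

lemma nrm_two_eq (u : (Fin n → Bool) → ℝ) : nrm n 2 u = √(Ev n (fun x => u x ^ 2)) := by
  simp_rw [nrm, Real.sqrt_eq_rpow, Real.rpow_two, sq_abs]

lemma nrm_one_le_nrm_two (u : (Fin n → Bool) → ℝ) : nrm n 1 u ≤ nrm n 2 u := by
  simpa [nrm_one_eq, nrm_two_eq, Ev_const] using Ev_mul_le_sqrt_mul_sqrt (fun x => |u x|) 1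

lemma fhat_eq_zero_of_nrm_one_eq_zero {u : (Fin n → Bool) → ℝ} (hu : nrm n 1 u = 0)
    (S : Finset (Fin n)) : fhat n u S = 0 := by
  rw [nrm_one_eq, Ev_eq_zero_iff_of_nonneg fun x => abs_nonneg _] at hu
  simp [fhat, abs_eq_zero.1 (hu _), Ev_const]

noncomputable def lowDegreePart (d : ℕ) (u : (Fin n → Bool) → ℝ) (x : Fin n → Bool) : ℝ :=
  ∑ S with #S ≤ d, fhat n u S * chi n S x

lemma fhat_lowDegreePart (d : ℕ) (u : (Fin n → Bool) → ℝ) (T : Finset (Fin n)) :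
    fhat n (lowDegreePart d u) T = if #T ≤ d then fhat n u T else 0 := by
  unfold lowDegreePart
  rw [fhat_sum_chi]
  simp

lemma Ev_mul_lowDegreePart (d : ℕ) (u : (Fin n → Bool) → ℝ) :
    Ev n (fun x => u x * lowDegreePart d u x) = ∑ S with #S ≤ d, fhat n u S ^ 2 := by
  simp_rw [lowDegreePart, Ev_mul_sum_chi, sq]

lemma Ev_sq_lowDegreePart (d : ℕ) (u : (Fin n → Bool) → ℝ) :
    Ev n (fun x => lowDegreePart d u x ^ 2) = ∑ S with #S ≤ d, fhat n u S ^ 2 := by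
  simp_rw [plancherel, fhat_lowDegreePart, sum_filter]
  exact sum_congr rfl fun S _ => by split_ifs <;> simp

lemma Ev_pow_four_lowDegreePart_le (d : ℕ) (u : (Fin n → Bool) → ℝ) :
    Ev n (fun x => lowDegreePart d u x ^ 4) ≤ 9 ^ d * (∑ S with #S ≤ d, fhat n u S ^ 2) ^ 2 := by
  rw [← Ev_sq_lowDegreePart]
  refine Ev_pow_four_le_of_fhat_support univ d _ fun S hS => ⟨subset_univ S, ?_⟩
  rw [fhat_lowDegreePart] at hS
  by_contra hd
  exact hS (if_neg hd)

/-- The level-`d` inequality. For `h = u^{≤d}`, `‖h‖₂² = E[u h] ≤ ‖u‖₁^{1/2} E[|u| h²]^{1/2}` and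
`E[|u| h²] ≤ ‖u‖₂ ‖h‖₄² ≤ 3^d ‖u‖₂ ‖h‖₂²` by Bonami. -/
theorem sum_sq_fhat_le_three_pow_mul_nrm (d : ℕ) (u : (Fin n → Bool) → ℝ) :
    ∑ S with #S ≤ d, fhat n u S ^ 2 ≤ 3 ^ d * (nrm n 2 u * nrm n 1 u) := by
  set X := ∑ S with #S ≤ d, fhat n u S ^ 2
  set h := lowDegreePart d u
  have hX : 0 ≤ X := sum_nonneg fun S _ => sq_nonneg _
  have hL4 : nrm n 2 (fun x => h x ^ 2) ≤ 3 ^ d * X := by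
    simp_rw [nrm_two_eq, ← pow_mul]
    refine (Real.sqrt_le_sqrt (Ev_pow_four_lowDegreePart_le d u)).trans_eq ?_
    rw [show (9 : ℝ) ^ d = (3 ^ d) ^ 2 by rw [← pow_mul, mul_comm, pow_mul]; norm_num,
      ← mul_pow, Real.sqrt_sq (by positivity)]
  have hweighted : Ev n (fun x => |u x| * h x ^ 2) ≤ nrm n 2 u * (3 ^ d * X) := by
    refine (Ev_mul_le_sqrt_mul_sqrt _ _).trans ?_
    simp_rw [sq_abs, ← nrm_two_eq]
    exact mul_le_mul_of_nonneg_left hL4 (nrm_nonneg _ _)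
  have hsplit : X ≤ √(nrm n 1 u) * √(Ev n (fun x => |u x| * h x ^ 2)) := by
    calc X = Ev n (fun x => u x * h x) := (Ev_mul_lowDegreePart d u).symm
      _ ≤ Ev n (fun x => √|u x| * (√|u x| * |h x|)) := Ev_mono fun x => by
          rw [← mul_assoc, Real.mul_self_sqrt (abs_nonneg _), ← abs_mul]
          exact le_abs_self _
      _ ≤ _ := Ev_mul_le_sqrt_mul_sqrt _ _
      _ = √(nrm n 1 u) * √(Ev n (fun x => |u x| * h x ^ 2)) := by
          simp_rw [mul_pow, Real.sq_sqrt (abs_nonneg _), sq_abs, nrm_one_eq]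
  have hXsq : X ^ 2 ≤ nrm n 1 u * (nrm n 2 u * (3 ^ d * X)) := by
    calc X ^ 2 ≤ (√(nrm n 1 u) * √(Ev n (fun x => |u x| * h x ^ 2))) ^ 2 :=
          pow_le_pow_left₀ hX hsplit 2
      _ = nrm n 1 u * Ev n (fun x => |u x| * h x ^ 2) := by
          rw [mul_pow, Real.sq_sqrt (nrm_nonneg _ _),
            Real.sq_sqrt (Ev_nonneg fun x => by positivity)]
      _ ≤ nrm n 1 u * (nrm n 2 u * (3 ^ d * X)) :=
          mul_le_mul_of_nonneg_left hweighted (nrm_nonneg _ _)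
  rcases hX.eq_or_lt with hX0 | hXpos
  · rw [← hX0]
    exact mul_nonneg (by positivity) (mul_nonneg (nrm_nonneg _ _) (nrm_nonneg _ _))
  · nlinarith

end LevelInequality

section CoreBound

lemma sum_abs_fhat_mul_abs_fhat_le (u v : (Fin n → Bool) → ℝ) :
    ∑ S, |fhat n u S| * |fhat n v S| ≤ nrm n 2 u * nrm n 2 v := by
  refine (Real.sum_mul_le_sqrt_mul_sqrt _ _ _).trans_eq ?_
  simp_rw [sq_abs, ← plancherel, nrm_two_eq]

lemma sum_abs_fhat_mul_abs_fhat_card_le (d : ℕ) (u v : (Fin n → Bool) → ℝ) :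
    ∑ S with #S ≤ d, |fhat n u S| * |fhat n v S|
      ≤ 3 ^ d * √(nrm n 2 u * nrm n 2 v * (nrm n 1 u * nrm n 1 v)) := by
  refine (Real.sum_mul_le_sqrt_mul_sqrt _ _ _).trans ?_
  simp_rw [sq_abs]
  calc √(∑ S with #S ≤ d, fhat n u S ^ 2) * √(∑ S with #S ≤ d, fhat n v S ^ 2)
      ≤ √(3 ^ d * (nrm n 2 u * nrm n 1 u)) * √(3 ^ d * (nrm n 2 v * nrm n 1 v)) :=
        mul_le_mul (Real.sqrt_le_sqrt (sum_sq_fhat_le_three_pow_mul_nrm d u))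
          (Real.sqrt_le_sqrt (sum_sq_fhat_le_three_pow_mul_nrm d v)) (Real.sqrt_nonneg _)
          (Real.sqrt_nonneg _)
    _ = 3 ^ d * √(nrm n 2 u * nrm n 2 v * (nrm n 1 u * nrm n 1 v)) := by
        have := nrm_nonneg 2 u; have := nrm_nonneg 1 u
        rw [← Real.sqrt_mul (by positivity), show 3 ^ d * (nrm n 2 u * nrm n 1 u) *
            (3 ^ d * (nrm n 2 v * nrm n 1 v)) = (3 ^ d) ^ 2 * (nrm n 2 u * nrm n 2 v *
            (nrm n 1 u * nrm n 1 v)) by ring, Real.sqrt_mul (by positivity),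
          Real.sqrt_sq (by positivity)]

lemma one_add_mul_three_pow_floor_sqrt_le {L : ℝ} (hL : 0 ≤ L) :
    (1 + L) * 3 ^ ⌊√(1 + L)⌋₊ ≤ 16 * Real.exp (L / 2) := by
  set t := √(1 + L)
  have ht1 : 1 ≤ t := Real.one_le_sqrt.2 (by linarith)
  have ht2 : t ^ 2 = 1 + L := Real.sq_sqrt (by linarith)
  have hlog3 : Real.log 3 ≤ 2 * Real.log 2 := by
    rw [← Real.log_rpow two_pos]
    exact Real.log_le_log (by norm_num) (by norm_num)
  have hlogt : Real.log t ≤ Real.log 2 + t / 2 - 1 := by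
    have h := Real.log_le_sub_one_of_pos (show 0 < t / 2 by positivity)
    rw [Real.log_div (by positivity) two_ne_zero] at h
    linarith
  have hpow : (3 : ℝ) ^ ⌊t⌋₊ ≤ Real.exp (t * Real.log 3) := by
    rw [← Real.exp_log (by norm_num : (0 : ℝ) < 3), ← Real.exp_nat_mul, Real.exp_log (by norm_num)]
    exact Real.exp_le_exp.2 (mul_le_mul_of_nonneg_right (Nat.floor_le (by positivity))
      (Real.log_nonneg (by norm_num)))
  have hmain : t ^ 2 * Real.exp (t * Real.log 3) ≤ 16 * Real.exp (L / 2) := by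
    rw [← Real.log_le_log_iff (by positivity) (by positivity), Real.log_mul (by positivity)
      (Real.exp_ne_zero _), Real.log_mul (by norm_num) (Real.exp_ne_zero _), Real.log_exp,
      Real.log_exp, Real.log_pow, show (16 : ℝ) = 2 ^ 4 by norm_num, Real.log_pow]
    have hL' : L = t ^ 2 - 1 := by linarith
    rw [hL']
    nlinarith [sq_nonneg (t - (1 + 2 * Real.log 2)), mul_le_mul_of_nonneg_right hlog3
      (zero_le_one.trans ht1), Real.log_two_lt_d9, Real.log_two_gt_d9]
  calc (1 + L) * 3 ^ ⌊t⌋₊ ≤ t ^ 2 * Real.exp (t * Real.log 3) := by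
        rw [ht2]; exact mul_le_mul_of_nonneg_left hpow (by linarith)
    _ ≤ 16 * Real.exp (L / 2) := hmain

lemma inv_choose_two_le_ite_add (k d : ℕ) {L : ℝ} (hL : 0 ≤ L) (hd : 1 + L < (d + 1) ^ 2) :
    ((k + 2).choose 2 : ℝ)⁻¹ ≤ (if k ≤ d then 1 else 0) + 2 / (1 + L) := by
  have hchoose : ((k + 2).choose 2 : ℝ) = (k + 1) * (k + 2) / 2 := by
    rw [Nat.cast_choose_two]; push_cast; ring
  have hk0 : (0 : ℝ) ≤ k := k.cast_nonneg
  rw [hchoose, inv_div]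
  split_ifs with hk
  · have h1 : 2 / ((k + 1) * (k + 2) : ℝ) ≤ 1 := by
      rw [div_le_one (by positivity)]; nlinarith
    linarith [div_nonneg zero_le_two (by linarith : (0 : ℝ) ≤ 1 + L)]
  · have hk' : (d : ℝ) + 1 ≤ k := by exact_mod_cast Nat.lt_of_not_le hk
    rw [zero_add]
    exact div_le_div_of_nonneg_left zero_le_two (by linarith) (by nlinarith)

lemma sqrt_mul_mul_exp_half_log_div {a b : ℝ} (ha : 0 < a) (hb : 0 < b) :
    √(b * a) * Real.exp (Real.log (b / a) / 2) = b := by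
  rw [Real.exp_half, Real.exp_log (div_pos hb ha), ← Real.sqrt_mul (by positivity),
    mul_div_assoc', mul_comm b a, mul_assoc, mul_div_cancel_left₀ _ ha.ne',
    Real.sqrt_mul_self hb.le]

lemma sum_abs_fhat_mul_abs_fhat_mul_inv_choose_le (d : ℕ) {L : ℝ} (hL : 0 ≤ L)
    (hd : 1 + L < (d + 1) ^ 2) (u v : (Fin n → Bool) → ℝ) :
    ∑ S, |fhat n u S| * |fhat n v S| * ((#S + 2).choose 2 : ℝ)⁻¹
      ≤ 3 ^ d * √(nrm n 2 u * nrm n 2 v * (nrm n 1 u * nrm n 1 v))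
        + 2 / (1 + L) * (nrm n 2 u * nrm n 2 v) := by
  calc ∑ S, |fhat n u S| * |fhat n v S| * ((#S + 2).choose 2 : ℝ)⁻¹
      ≤ ∑ S, |fhat n u S| * |fhat n v S| * ((if #S ≤ d then 1 else 0) + 2 / (1 + L)) :=
        sum_le_sum fun S _ => mul_le_mul_of_nonneg_left (inv_choose_two_le_ite_add _ d hL hd)
          (by positivity)
    _ = ∑ S with #S ≤ d, |fhat n u S| * |fhat n v S|
          + 2 / (1 + L) * ∑ S, |fhat n u S| * |fhat n v S| := by
        simp_rw [mul_add, sum_add_distrib, mul_ite, mul_one, mul_zero, sum_ite, sum_const_zero,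
          add_zero, mul_sum, mul_comm]
    _ ≤ _ := add_le_add (sum_abs_fhat_mul_abs_fhat_card_le d u v)
        (mul_le_mul_of_nonneg_left (sum_abs_fhat_mul_abs_fhat_le u v) (by positivity))

theorem abs_sum_fhat_mul_fhat_inv_choose_le (u v : (Fin n → Bool) → ℝ) :
    |∑ S, fhat n u S * fhat n v S * ((#S + 2).choose 2 : ℝ)⁻¹|
      ≤ 18 * (nrm n 2 u * nrm n 2 v /
        (1 + Real.log (nrm n 2 u * nrm n 2 v / (nrm n 1 u * nrm n 1 v)))) := by
  set N₂ := nrm n 2 u * nrm n 2 v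
  set N₁ := nrm n 1 u * nrm n 1 v
  have hN₂ : 0 ≤ N₂ := mul_nonneg (nrm_nonneg _ _) (nrm_nonneg _ _)
  rcases (mul_nonneg (nrm_nonneg 1 u) (nrm_nonneg 1 v)).eq_or_lt with hN₁ | hN₁
  · have hN₁0 : N₁ = 0 := hN₁.symm
    rcases mul_eq_zero.1 hN₁0 with hu | hv
    · simp [fhat_eq_zero_of_nrm_one_eq_zero hu, hN₁0, hN₂]
    · simp [fhat_eq_zero_of_nrm_one_eq_zero hv, hN₁0, hN₂]
  have hN₁₂ : N₁ ≤ N₂ := mul_le_mul (nrm_one_le_nrm_two u) (nrm_one_le_nrm_two v)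
    (nrm_nonneg _ _) (nrm_nonneg _ _)
  set L := Real.log (N₂ / N₁)
  have hL : 0 ≤ L := Real.log_nonneg ((one_le_div hN₁).2 hN₁₂)
  set d := ⌊√(1 + L)⌋₊
  have hd : 1 + L < (d + 1) ^ 2 := (Real.sqrt_lt' (by positivity)).1 (Nat.lt_floor_add_one _)
  have hlow : 3 ^ d * √(N₂ * N₁) ≤ 16 * (N₂ / (1 + L)) := by
    rw [mul_div_assoc', le_div_iff₀ (by positivity)]
    calc 3 ^ d * √(N₂ * N₁) * (1 + L) = √(N₂ * N₁) * ((1 + L) * 3 ^ d) := by ring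
      _ ≤ √(N₂ * N₁) * (16 * Real.exp (L / 2)) :=
          mul_le_mul_of_nonneg_left (one_add_mul_three_pow_floor_sqrt_le hL) (Real.sqrt_nonneg _)
      _ = 16 * N₂ := by
          conv_rhs => rw [← sqrt_mul_mul_exp_half_log_div hN₁ (hN₁.trans_le hN₁₂)]
          ring
  calc |∑ S, fhat n u S * fhat n v S * ((#S + 2).choose 2 : ℝ)⁻¹|
      ≤ ∑ S, |fhat n u S| * |fhat n v S| * ((#S + 2).choose 2 : ℝ)⁻¹ := by
        refine (abs_sum_le_sum_abs _ _).trans_eq (sum_congr rfl fun S _ => ?_)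
        rw [abs_mul, abs_mul, abs_inv, Nat.abs_cast]
    _ ≤ 3 ^ d * √(N₂ * N₁) + 2 / (1 + L) * N₂ :=
        sum_abs_fhat_mul_abs_fhat_mul_inv_choose_le d hL hd u v
    _ ≤ 18 * (N₂ / (1 + L)) := by
        rw [show 18 * (N₂ / (1 + L)) = 16 * (N₂ / (1 + L)) + 2 / (1 + L) * N₂ by ring]
        linarith

end CoreBound

section PairDecomposition

lemma sum_finset_eq_sum_powerset_erase {α M : Type*} [Fintype α] [DecidableEq α]
    [AddCommMonoid M] (i : α) (F : Finset α → M) :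
    ∑ S, F S = ∑ t ∈ (univ.erase i).powerset, (F t + F (insert i t)) := by
  conv_lhs => rw [← powerset_univ, ← insert_erase (mem_univ i)]
  rw [sum_powerset_insert (notMem_erase i univ), sum_add_distrib]

lemma sum_pairs_lt_ite_mem_eq_choose_two {α : Type*} [Fintype α] [LinearOrder α] (S : Finset α) :
    ∑ i, ∑ j with i < j, (if i ∈ S ∧ j ∈ S then 1 else 0 : ℝ) = ((#S).choose 2 : ℕ) := by
  rw [← card_product_filter_lt, card_filter, Nat.cast_sum, sum_product]
  conv_rhs => rw [← sum_ite_mem_eq]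
  refine sum_congr rfl fun i _ => ?_
  conv_rhs => rw [← sum_ite_mem_eq]
  rw [sum_filter]
  split_ifs with hi
  · refine sum_congr rfl fun j _ => ?_
    split_ifs <;> simp_all
  · simp [hi]

lemma filter_not_two_le_card {α : Type*} [Fintype α] [DecidableEq α] :
    ({S | ¬2 ≤ #S} : Finset (Finset α)) = insert ∅ (univ.map ⟨singleton, singleton_injective⟩) := by
  ext S
  simp only [mem_filter, mem_univ, true_and, mem_insert, mem_map, Embedding.coeFn_mk]
  rw [not_le, Nat.lt_succ_iff, Nat.le_one_iff_eq_zero_or_eq_one, card_eq_zero, card_eq_one]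
  simp [eq_comm]

lemma sum_pairs_lt_sum_ite_mem_div_choose_two {α : Type*} [Fintype α] [LinearOrder α]
    (a : Finset α → ℝ) :
    ∑ i, ∑ j with i < j, ∑ S, (if i ∈ S ∧ j ∈ S then a S / ((#S).choose 2 : ℕ) else 0)
      = ∑ S with 2 ≤ #S, a S := by
  rw [sum_filter]
  simp_rw [sum_comm (s := univ.filter _), sum_comm (γ := α) (s := univ)]
  refine sum_congr rfl fun S _ => ?_
  have hfactor (i j : α) : (if i ∈ S ∧ j ∈ S then a S / ((#S).choose 2 : ℕ) else 0)
      = (if i ∈ S ∧ j ∈ S then 1 else 0) * (a S / ((#S).choose 2 : ℕ)) := by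
    split_ifs <;> simp
  simp_rw [hfactor, ← sum_mul, sum_pairs_lt_ite_mem_eq_choose_two]
  split_ifs with h
  · exact mul_div_cancel₀ _ (Nat.cast_ne_zero.2 (Nat.choose_pos h).ne')
  · simp [Nat.choose_eq_zero_of_lt (not_le.1 h)]

lemma sum_eq_add_sum_singleton_add_sum_pairs {α : Type*} [Fintype α] [LinearOrder α]
    (a : Finset α → ℝ) :
    ∑ S, a S = a ∅ + ∑ i, a {i}
      + ∑ i, ∑ j with i < j, ∑ S, (if i ∈ S ∧ j ∈ S then a S / ((#S).choose 2 : ℕ) else 0) := by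
  rw [sum_pairs_lt_sum_ite_mem_div_choose_two,
    ← sum_filter_not_add_sum_filter univ (fun S => 2 ≤ #S), filter_not_two_le_card,
    sum_insert (by simp), sum_map]
  rfl

end PairDecomposition

section Covariance

lemma sum_fhat_pD_mul_fhat_pD (i : Fin n) (u v : (Fin n → Bool) → ℝ)
    (G : Finset (Fin n) → ℝ) :
    ∑ S, fhat n (pD n i u) S * fhat n (pD n i v) S * G S
      = 4 * ∑ S, fhat n u S * fhat n v S * (if i ∈ S then G (S.erase i) else 0) := by
  rw [sum_finset_eq_sum_powerset_erase i, sum_finset_eq_sum_powerset_erase i, mul_sum]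
  refine sum_congr rfl fun t ht => ?_
  have hit : i ∉ t := fun h => notMem_erase i univ (mem_powerset.1 ht h)
  simp [fhat_pD, hit, erase_insert hit]
  ring

lemma sum_fhat_pD_pD_mul_inv_choose {i j : Fin n} (hij : i ≠ j) (f g : (Fin n → Bool) → ℝ) :
    ∑ S, fhat n (pD n i (pD n j f)) S * fhat n (pD n i (pD n j g)) S
        * ((#S + 2).choose 2 : ℝ)⁻¹
      = 16 * ∑ S, (if i ∈ S ∧ j ∈ S then fhat n f S * fhat n g S / ((#S).choose 2 : ℕ) else 0) := by
  rw [sum_fhat_pD_mul_fhat_pD i, sum_fhat_pD_mul_fhat_pD j, mul_sum, mul_sum, mul_sum]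
  refine sum_congr rfl fun S _ => ?_
  by_cases hj : j ∈ S
  · by_cases hi : i ∈ S
    · have hcard : #((S.erase j).erase i) + 2 = #S := by
        rw [card_erase_of_mem (mem_erase.2 ⟨hij, hi⟩), card_erase_of_mem hj]
        have := one_lt_card.2 ⟨i, hi, j, hj, hij⟩
        omega
      rw [if_pos hj, if_pos (mem_erase.2 ⟨hij, hi⟩), hcard, if_pos ⟨hi, hj⟩]
      ring
    · simp [hi, hj]
  · simp [hj]

theorem cov_sub_sum_Inf1_mul_Inf1_eq {f g : (Fin n → Bool) → ℝ} (hf : Increasing' n f)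
    (hg : Increasing' n g) :
    Ev n (fun x => f x * g x) - Ev n f * Ev n g - 1 / 4 * ∑ i, Inf1 n i f * Inf1 n i g
      = ∑ i, ∑ j with i < j, 1 / 16 * ∑ S, fhat n (pD n i (pD n j f)) S
          * fhat n (pD n i (pD n j g)) S * ((#S + 2).choose 2 : ℝ)⁻¹ := by
  rw [parseval, sum_eq_add_sum_singleton_add_sum_pairs, fhat_empty, fhat_empty]
  simp_rw [Inf1_eq_neg_two_mul_fhat hf, Inf1_eq_neg_two_mul_fhat hg]
  have hlevel_one : 1 / 4 * ∑ i, -2 * fhat n f {i} * (-2 * fhat n g {i})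
      = ∑ i, fhat n f {i} * fhat n g {i} := by
    rw [mul_sum]
    exact sum_congr rfl fun i _ => by ring
  have hpairs : ∑ i, ∑ j with i < j, ∑ S,
      (if i ∈ S ∧ j ∈ S then fhat n f S * fhat n g S / ((#S).choose 2 : ℕ) else 0)
      = ∑ i, ∑ j with i < j, 1 / 16 * ∑ S, fhat n (pD n i (pD n j f)) S
          * fhat n (pD n i (pD n j g)) S * ((#S + 2).choose 2 : ℝ)⁻¹ :=
    sum_congr rfl fun i _ => sum_congr rfl fun j hj => by
      rw [sum_fhat_pD_pD_mul_inv_choose (mem_filter.1 hj).2.ne]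
      ring
  rw [hlevel_one, hpairs]
  ring

end Covariance

end BooleanCube

open BooleanCube

/-- Talagrand `L¹`-`L²`-type upper bound on the deviation of the
covariance of increasing functions from its level-1 contribution. (Terms with
`∂_{ij} f ≡ 0` or `∂_{ij} g ≡ 0` vanish: their numerator is `0`.) -/
theorem talagrand_L1_L2_upper_bound (n : ℕ) (f g : (Fin n → Bool) → ℝ)
    (hf : Increasing' n f) (hg : Increasing' n g) :
    |Ev n (fun x => f x * g x) - Ev n f * Ev n g -
        (1 / 4) * ∑ i : Fin n, Inf1 n i f * Inf1 n i g|
    ≤ (9 / 8) * ∑ i : Fin n, ∑ j ∈ Finset.univ.filter (fun j : Fin n => i < j),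
        (nrm n 2 (pD n i (pD n j f)) * nrm n 2 (pD n i (pD n j g))) /
          (1 + Real.log
            ((nrm n 2 (pD n i (pD n j f)) * nrm n 2 (pD n i (pD n j g))) /
             (nrm n 1 (pD n i (pD n j f)) * nrm n 1 (pD n i (pD n j g))))) := by
  rw [cov_sub_sum_Inf1_mul_Inf1_eq hf hg, mul_sum]
  refine (abs_sum_le_sum_abs _ _).trans (sum_le_sum fun i _ => ?_)
  rw [mul_sum]
  refine (abs_sum_le_sum_abs _ _).trans (sum_le_sum fun j _ => ?_)
  rw [abs_mul, abs_of_pos (by norm_num : (0 : ℝ) < 1 / 16)]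
  linarith [abs_sum_fhat_mul_fhat_inv_choose_le (pD n i (pD n j f)) (pD n i (pD n j g))]
end

section
/- For every R ≥ 1, ∫_0^∞ (1 − e^{−t})·e^{−t}·R^{−tanh(t/2)} dt ≤ 9/(1 + log R). -/
/-!
With `u = 1 - e^{-t}` one has `tanh (t/2) = u / (1 + e^{-t}) ≥ u / 2`, so the integrand is at most
`e^{-t} · u · e^{-c u}` with `c = (log R) / 2`. Since `e^{c u} ≥ 1 + c u ≥ (1 + c) u` for
`0 ≤ u ≤ 1`, this is at most `e^{-t} / (1 + c)`, and integrating gives `2 / (2 + log R)`.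
-/

open MeasureTheory Real Set

theorem Real.tanh_half_eq (t : ℝ) : tanh (t / 2) = (1 - exp (-t)) / (1 + exp (-t)) := by
  have hsplit : exp (-t) = exp (-(t / 2)) * exp (-(t / 2)) := by
    rw [← exp_add]; ring_nf
  have hinv : exp (t / 2) * exp (-(t / 2)) = 1 := by rw [← exp_add]; simp
  rw [tanh_eq, hsplit, div_eq_div_iff (by positivity) (by positivity)]
  linear_combination 2 * exp (-(t / 2)) * hinv

theorem Real.one_sub_exp_neg_nonneg {t : ℝ} (ht : 0 ≤ t) : 0 ≤ 1 - exp (-t) :=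
  sub_nonneg.2 (exp_le_one_iff.2 (neg_nonpos.2 ht))

theorem Real.one_sub_exp_neg_le_two_mul_tanh_half {t : ℝ} (ht : 0 ≤ t) :
    1 - exp (-t) ≤ 2 * tanh (t / 2) := by
  have hu := one_sub_exp_neg_nonneg ht
  rw [tanh_half_eq, mul_div_assoc', le_div_iff₀ (by positivity)]
  nlinarith

theorem Real.mul_one_add_le_exp_mul {u : ℝ} (hu : u ≤ 1) (c : ℝ) :
    u * (1 + c) ≤ exp (c * u) := by
  nlinarith [add_one_le_exp (c * u)]

theorem one_sub_exp_neg_mul_rpow_neg_tanh_half_le {R t : ℝ} (hR : 1 ≤ R) (ht : 0 ≤ t) :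
    (1 - exp (-t)) * R ^ (-tanh (t / 2)) ≤ 2 / (2 + log R) := by
  set u := 1 - exp (-t)
  have hL : 0 ≤ log R := log_nonneg hR
  have hu : u ≤ 1 := by simp only [u]; linarith [exp_pos (-t)]
  have hdecay : R ^ (-tanh (t / 2)) ≤ exp (-(log R / 2 * u)) := by
    rw [rpow_def_of_pos (by linarith)]
    gcongr
    nlinarith [one_sub_exp_neg_le_two_mul_tanh_half ht]
  have hbound : u * exp (-(log R / 2 * u)) ≤ 2 / (2 + log R) := by
    rw [exp_neg, ← div_eq_mul_inv, div_le_div_iff₀ (exp_pos _) (by positivity)]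
    nlinarith [mul_one_add_le_exp_mul hu (log R / 2)]
  calc u * R ^ (-tanh (t / 2)) ≤ u * exp (-(log R / 2 * u)) :=
        mul_le_mul_of_nonneg_left hdecay (one_sub_exp_neg_nonneg ht)
    _ ≤ 2 / (2 + log R) := hbound

/-- For every `R ≥ 1`,
`∫_0^∞ (1 − e^{−t}) e^{−t} R^{−tanh(t/2)} dt ≤ 9/(1 + log R)`. -/
theorem kernel_integral_bound (R : ℝ) (hR : 1 ≤ R) :
    ∫ t in Set.Ioi (0 : ℝ),
        (1 - Real.exp (-t)) * Real.exp (-t) * R ^ (-Real.tanh (t / 2))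
      ≤ 9 / (1 + Real.log R) := by
  have hL : 0 ≤ log R := log_nonneg hR
  have hmajorant : ∀ t ∈ Ioi (0 : ℝ),
      (1 - exp (-t)) * exp (-t) * R ^ (-tanh (t / 2)) ≤ 2 / (2 + log R) * exp (-t) := by
    intro t ht
    rw [mul_right_comm]
    exact mul_le_mul_of_nonneg_right
      (one_sub_exp_neg_mul_rpow_neg_tanh_half_le hR (le_of_lt ht)) (exp_pos _).le
  have hnonneg : ∀ t ∈ Ioi (0 : ℝ), 0 ≤ (1 - exp (-t)) * exp (-t) * R ^ (-tanh (t / 2)) :=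
    fun t ht => mul_nonneg (mul_nonneg (one_sub_exp_neg_nonneg (le_of_lt ht)) (exp_pos _).le)
      (rpow_nonneg (by linarith) _)
  calc _ ≤ ∫ t in Ioi (0 : ℝ), 2 / (2 + log R) * exp (-t) :=
        integral_mono_of_nonneg ((ae_restrict_mem measurableSet_Ioi).mono hnonneg)
          ((integrableOn_exp_neg_Ioi 0).const_mul _)
          ((ae_restrict_mem measurableSet_Ioi).mono hmajorant)
    _ = 2 / (2 + log R) := by rw [integral_const_mul, integral_exp_neg_Ioi_zero, mul_one]
    _ ≤ 9 / (1 + log R) := by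
        rw [div_le_div_iff₀ (by positivity) (by positivity)]
        linarith
end

section
/- Let d ≥ 2 and f, g : {0,1}^n → ℝ. For T = {i_1,…,i_d} ⊆ [n] with |T| = d write ∂_T f = ∂_{i_1} ∘ ⋯ ∘ ∂_{i_d}(f). Then ∑_{S ⊆ [n], |S| ≥ d} f̂(S)·ĝ(S) = (d/4^d)·∑_{T ⊆ [n], |T| = d} ∫_0^∞ (1 − e^{−t})^{d−1}·e^{−t}·E[∂_T f · P_t(∂_T g)] dt. -/
/-!
Fourier-analytically, `∂_i` kills every character `χ_S` with `i ∈ S` and sends `χ_{S ∪ {i}}` to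
`-2 χ_S` otherwise, so `(∂_T f)^(S) = (-2)^d f̂(S ∪ T)` for `S` disjoint from `T`. By Parseval,
`E[∂_T f · P_t ∂_T g] = 4^d ∑_{S ∩ T = ∅} e^{-t|S|} f̂(S ∪ T) ĝ(S ∪ T)`, and the time weight turns
`e^{-t|S|}` into the Beta integral `(d-1)! |S|! / (d + |S|)!`. A set `U` with `|U| = k ≥ d` arises
as `S ∪ T` in `C(k, d)` ways, and `C(k, d) · d · (d-1)! (k-d)! / k! = 1`.
-/

open Finset MeasureTheory

section Fourier

variable {n : ℕ}

lemma sum_update_true_add_sum_update_false (i : Fin n) (H : (Fin n → Bool) → ℝ) :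
    ∑ x, H (Function.update x i true) + ∑ x, H (Function.update x i false) = 2 * ∑ x, H x := by
  have flip_bij : Function.Bijective fun x : Fin n → Bool => Function.update x i (!x i) :=
    Function.Involutive.bijective fun x => by simp
  have pair (x : Fin n → Bool) : H (Function.update x i true) + H (Function.update x i false) =
      H x + H (Function.update x i (!x i)) := by
    have hx := Function.update_eq_self i x
    cases h : x i <;> rw [h] at hx <;> simp [hx, add_comm]
  rw [← sum_add_distrib, sum_congr rfl fun x _ => pair x, sum_add_distrib, two_mul,
    Fintype.sum_bijective _ flip_bij _ _ fun _ => rfl]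

lemma chi_insert_update {S : Finset (Fin n)} {i : Fin n} (hi : i ∉ S) (x : Fin n → Bool)
    (b : Bool) :
    chi n (insert i S) (Function.update x i b) = (if b then -1 else 1) * chi n S x := by
  rw [chi, prod_insert hi, Function.update_self]
  congr 1
  exact prod_congr rfl fun j hj => by rw [Function.update_of_ne (ne_of_mem_of_not_mem hj hi)]

lemma pD_update (i : Fin n) (f : (Fin n → Bool) → ℝ) (x : Fin n → Bool) (b : Bool) :
    pD n i f (Function.update x i b) = pD n i f x := by
  simp only [pD, Function.update_idem]

lemma fhat_pD (i : Fin n) (f : (Fin n → Bool) → ℝ) (S : Finset (Fin n)) :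
    fhat n (pD n i f) S = if i ∈ S then 0 else -2 * fhat n f (insert i S) := by
  simp only [fhat, Ev]
  split_ifs with hi
  · obtain ⟨S', hiS', rfl⟩ : ∃ S', i ∉ S' ∧ S = insert i S' :=
      ⟨S.erase i, notMem_erase i S, (insert_erase hi).symm⟩
    -- `∂_i f` does not depend on `x_i`, while `χ_S` is odd in `x_i`.
    have h := sum_update_true_add_sum_update_false i fun x => pD n i f x * chi n (insert i S') x
    simp only [pD_update, chi_insert_update hiS', ← sum_add_distrib, ite_true, Bool.false_eq_true,
      ite_false] at h
    have h0 : ∑ x, (pD n i f x * (-1 * chi n S' x) + pD n i f x * (1 * chi n S' x)) = 0 :=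
      sum_eq_zero fun x _ => by ring
    rw [h, mul_eq_zero] at h0
    rw [h0.resolve_left two_ne_zero, zero_div]
  · have h := sum_update_true_add_sum_update_false i fun x => f x * chi n (insert i S) x
    simp only [chi_insert_update hi, ite_true, Bool.false_eq_true, ite_false] at h
    rw [mul_div_assoc', neg_mul, ← h]
    simp only [pD, sub_mul, sum_sub_distrib, neg_one_mul, one_mul, mul_neg, sum_neg_distrib]
    ring

lemma fhat_pDList {l : List (Fin n)} (hl : l.Nodup) (f : (Fin n → Bool) → ℝ)
    (S : Finset (Fin n)) :
    fhat n (pDList n l f) S =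
      if Disjoint S l.toFinset then (-2) ^ l.length * fhat n f (S ∪ l.toFinset) else 0 := by
  induction l generalizing S with
  | nil => simp [pDList]
  | cons i l ih =>
    obtain ⟨hil, hl⟩ := List.nodup_cons.mp hl
    have hil : i ∉ l.toFinset := List.mem_toFinset.not.mpr hil
    by_cases hiS : i ∈ S
    · simp [pDList, fhat_pD, hiS]
    · simp only [pDList, fhat_pD, ih hl, hiS, List.toFinset_cons, disjoint_insert_right,
        disjoint_insert_left, hil, insert_union, union_insert, not_false_eq_true, true_and,
        if_false, List.length_cons]
      split_ifs <;> ring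

lemma fhat_pDT (T : Finset (Fin n)) (f : (Fin n → Bool) → ℝ) (S : Finset (Fin n)) :
    fhat n (pDT n T f) S = if Disjoint S T then (-2) ^ T.card * fhat n f (S ∪ T) else 0 := by
  rw [pDT, fhat_pDList (sort_nodup T _), sort_toFinset, length_sort]

lemma Ev_mul_heat (t : ℝ) (F G : (Fin n → Bool) → ℝ) :
    Ev n (fun x => F x * heat n t G x) =
      ∑ S, Real.exp (-(t * S.card)) * fhat n G S * fhat n F S := by
  simp only [Ev, heat, fhat, mul_sum, sum_div]
  rw [sum_comm]
  exact sum_congr rfl fun S _ => sum_congr rfl fun x _ => by ring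

end Fourier

section BetaIntegral

open Real Set Nat

lemma integrableOn_one_sub_exp_neg_pow_mul_exp (k : ℕ) {c : ℝ} (hc : 0 < c) :
    IntegrableOn (fun t => (1 - exp (-t)) ^ k * exp (-(c * t))) (Ioi 0) := by
  refine (exp_neg_integrableOn_Ioi 0 hc).mono' (by fun_prop) ?_
  refine (ae_restrict_iff' measurableSet_Ioi).mpr (ae_of_all _ fun t (ht : 0 < t) => ?_)
  have h₀ : 0 ≤ 1 - exp (-t) := by linarith [exp_le_one_iff.mpr (neg_nonpos.mpr ht.le)]
  have h₁ : 1 - exp (-t) ≤ 1 := by linarith [exp_pos (-t)]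
  rw [norm_mul, norm_of_nonneg (pow_nonneg h₀ k), norm_of_nonneg (exp_pos _).le, neg_mul]
  exact mul_le_of_le_one_left (exp_pos _).le (pow_le_one₀ h₀ h₁)

/-- The Beta integral `B(k + 1, m + 1) = ∫₀¹ (1 - u)^k u^m du` after substituting `u = e^{-t}`. -/
lemma integral_one_sub_exp_neg_pow_mul_exp (k m : ℕ) :
    ∫ t in Ioi (0 : ℝ), (1 - exp (-t)) ^ k * exp (-((m + 1) * t)) =
      k ! * m ! / (k + m + 1) ! := by
  induction k generalizing m with
  | zero =>
    have := integral_exp_mul_Ioi (a := -((m : ℝ) + 1)) (neg_neg_of_pos (by positivity)) 0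
    simp only [neg_mul, mul_zero, exp_zero, neg_div_neg_eq] at this
    rw [zero_add, Nat.factorial_succ]
    push_cast
    simp only [pow_zero, one_mul, this, Nat.factorial_zero, Nat.cast_one]
    field_simp
  | succ k ih =>
    have split (t : ℝ) : (1 - exp (-t)) ^ (k + 1) * exp (-((m + 1) * t)) =
        (1 - exp (-t)) ^ k * exp (-((m + 1) * t)) -
          (1 - exp (-t)) ^ k * exp (-(((m + 1 : ℕ) + 1) * t)) := by
      push_cast
      rw [pow_succ, show -((m + 1 + 1) * t) = -t + -((m + 1) * t) by ring, exp_add]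
      ring
    simp only [split]
    rw [integral_sub (integrableOn_one_sub_exp_neg_pow_mul_exp k (by positivity))
      (integrableOn_one_sub_exp_neg_pow_mul_exp k (by positivity)), ih, ih,
      show k + (m + 1) + 1 = k + m + 1 + 1 by ring, show k + 1 + m + 1 = k + m + 1 + 1 by ring]
    simp only [Nat.factorial_succ]
    push_cast
    field_simp
    ring

lemma integral_one_sub_exp_neg_pow_mul_exp_neg_mul_sum {ι : Type*} (s : Finset ι) (a : ι → ℝ)
    (m : ι → ℕ) (k : ℕ) :
    ∫ t in Ioi (0 : ℝ), (1 - exp (-t)) ^ k * exp (-t) *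
        ∑ i ∈ s, a i * exp (-(t * m i)) =
      ∑ i ∈ s, a i * (k ! * (m i)! / (k + m i + 1)!) := by
  have merge (t : ℝ) (i : ι) :
      (1 - exp (-t)) ^ k * exp (-t) * (a i * exp (-(t * m i))) =
        a i * ((1 - exp (-t)) ^ k * exp (-((m i + 1) * t))) := by
    rw [show -((m i + 1) * t) = -t + -(t * m i) by ring, exp_add]
    ring
  simp only [mul_sum, merge]
  rw [integral_finsetSum _ fun i _ =>
    (integrableOn_one_sub_exp_neg_pow_mul_exp k (by positivity)).const_mul (a i)]
  simp only [integral_const_mul, integral_one_sub_exp_neg_pow_mul_exp]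

end BetaIntegral

lemma sum_card_eq_sum_disjoint_union {α M : Type*} [Fintype α] [DecidableEq α]
    [AddCommMonoid M] (d : ℕ) (φ : Finset α → ℕ → M) :
    ∑ T with T.card = d, ∑ S with Disjoint S T, φ (S ∪ T) S.card =
      ∑ U, U.card.choose d • φ U (U.card - d) := by
  have shift (T : Finset α) (hT : T.card = d) :
      ∑ S with Disjoint S T, φ (S ∪ T) S.card = ∑ U with T ⊆ U, φ U (U.card - d) := by
    refine sum_nbij' (· ∪ T) (· \ T) (by simp) (by simp [sdiff_disjoint]) ?_ ?_ ?_
    · intro S hS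
      exact union_sdiff_cancel_right (mem_filter.mp hS).2
    · intro U hU
      exact sdiff_union_of_subset (mem_filter.mp hU).2
    · intro S hS
      rw [card_union_of_disjoint (mem_filter.mp hS).2, hT, Nat.add_sub_cancel]
  rw [sum_congr rfl fun T hT => shift T (mem_filter.mp hT).2,
    sum_comm' (t' := univ) (s' := fun U => U.powersetCard d) (by simp [mem_powersetCard, and_comm])]
  simp only [sum_const, card_powersetCard]

open Nat in
lemma choose_mul_mul_factorial_div_factorial_eq_one {d k : ℕ} (hd : 1 ≤ d) (hk : d ≤ k) :
    (k.choose d : ℝ) * d * ((d - 1)! * (k - d)! / (d - 1 + (k - d) + 1)!) = 1 := by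
  rw [show d - 1 + (k - d) + 1 = k by omega, mul_div_assoc', div_eq_one_iff_eq (by positivity),
    ← choose_mul_factorial_mul_factorial hk, ← mul_factorial_pred (by omega : d ≠ 0)]
  push_cast
  ring

lemma Ev_pDT_mul_heat_pDT {n d : ℕ} {T : Finset (Fin n)} (hT : T.card = d)
    (f g : (Fin n → Bool) → ℝ) (t : ℝ) :
    Ev n (fun x => pDT n T f x * heat n t (pDT n T g) x) =
      ∑ S with Disjoint S T,
        4 ^ d * (fhat n f (S ∪ T) * fhat n g (S ∪ T)) * Real.exp (-(t * S.card)) := by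
  rw [Ev_mul_heat, sum_filter]
  refine sum_congr rfl fun S _ => ?_
  rw [fhat_pDT, fhat_pDT, hT]
  split_ifs
  · rw [show (4 : ℝ) ^ d = (-2) ^ d * (-2) ^ d by rw [← mul_pow]; norm_num]
    ring
  · ring

/-- Heat-semigroup representation of the level-`≥ d` Fourier weight
via the iterated discrete derivatives `∂_T`, `|T| = d`. -/
theorem heat_semigroup_representation_level_d (n d : ℕ) (hd : 2 ≤ d)
    (f g : (Fin n → Bool) → ℝ) :
    ∑ S ∈ Finset.univ.filter (fun S : Finset (Fin n) => d ≤ S.card),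
        fhat n f S * fhat n g S
    = ((d : ℝ) / 4 ^ d) *
        ∑ T ∈ Finset.univ.filter (fun T : Finset (Fin n) => T.card = d),
          ∫ t in Set.Ioi (0 : ℝ), (1 - Real.exp (-t)) ^ (d - 1) * Real.exp (-t) *
            Ev n (fun x => pDT n T f x * heat n t (pDT n T g) x) := by
  have level_T (T : Finset (Fin n)) (hT : T ∈ univ.filter fun T : Finset (Fin n) => T.card = d) :
      ∫ t in Set.Ioi (0 : ℝ), (1 - Real.exp (-t)) ^ (d - 1) * Real.exp (-t) *
          Ev n (fun x => pDT n T f x * heat n t (pDT n T g) x) =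
        ∑ S with Disjoint S T, 4 ^ d * (fhat n f (S ∪ T) * fhat n g (S ∪ T)) *
          ((d - 1).factorial * S.card.factorial / (d - 1 + S.card + 1).factorial) := by
    simp only [Ev_pDT_mul_heat_pDT (mem_filter.mp hT).2]
    exact integral_one_sub_exp_neg_pow_mul_exp_neg_mul_sum _ _ _ _
  rw [sum_congr rfl level_T, sum_card_eq_sum_disjoint_union d fun U s =>
    4 ^ d * (fhat n f U * fhat n g U) *
      ((d - 1).factorial * s.factorial / (d - 1 + s + 1).factorial : ℝ), mul_sum,
    sum_filter]
  refine sum_congr rfl fun U _ => ?_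
  split_ifs with hU
  · rw [nsmul_eq_mul, div_mul_eq_mul_div, eq_div_iff (by positivity)]
    linear_combination (-(4 ^ d * fhat n f U * fhat n g U)) *
      choose_mul_mul_factorial_div_factorial_eq_one (by omega) hU
  · simp [Nat.choose_eq_zero_of_lt (not_le.mp hU)]
end
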